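/- arXiv:1804.07107 — 4 statements merged into one kernel-verified Lean document; each statement's English description precedes it below -/
import Mathlib

section
/- Let Γ be an extension-parallel graph and let 𝒜 be the set of arc sets of directed o–d paths of Γ. Then for all pairwise distinct A, B, C ∈ 𝒜 we have A∩B ⊆ A∩C or A∩C ⊆ A∩B (nested intersections); equivalently, for all pairwise distinct A, B, C ∈ 𝒜, A∩(C∖B) = ∅ or A∩(B∖C) = ∅ (no bad configuration). -/
/-- A congestion game with `n` players on a finite resource type `R`:
each player has a finite set of actions (each action a set of resources),
and each resource has a delay function `ℕ → ℝ`. -/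
structure CGame (R : Type) [DecidableEq R] [Fintype R] (n : ℕ) where
  actions : Fin n → Finset (Finset R)
  delay : R → ℕ → ℝ

namespace CGame

variable {R : Type} [DecidableEq R] [Fintype R] {n : ℕ}

/-- The congestion `x(A)_r`: number of players using resource `r` in profile `A`. -/
def congestion (_G : CGame R n) (A : Fin n → Finset R) (r : R) : ℕ :=
  (Finset.univ.filter fun i => r ∈ A i).card

/-- The cost of player `i` in profile `A`. -/
def cost (G : CGame R n) (A : Fin n → Finset R) (i : Fin n) : ℝ :=
  ∑ r ∈ A i, G.delay r (G.congestion A r)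

/-- `A` is an outcome: each player plays one of his actions. -/
def IsOutcome (G : CGame R n) (A : Fin n → Finset R) : Prop :=
  ∀ i, A i ∈ G.actions i

/-- `A` is a (pure) Nash equilibrium. -/
def IsNash (G : CGame R n) (A : Fin n → Finset R) : Prop :=
  G.IsOutcome A ∧ ∀ i, ∀ B ∈ G.actions i, G.cost A i ≤ G.cost (Function.update A i B) i

/-- The subgame induced by the first player playing `a`. -/
def subgame (G : CGame R (n + 1)) (a : Finset R) : CGame R n where
  actions := fun i => G.actions i.succ
  delay := fun r y => G.delay r (y + if r ∈ a then 1 else 0)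

/-- The subgame induced by the first `m` players playing `P`. -/
def subgameMany {m k : ℕ} (G : CGame R (m + k)) (P : Fin m → Finset R) : CGame R k where
  actions := fun i => G.actions (Fin.natAdd m i)
  delay := fun r y => G.delay r (y + (Finset.univ.filter fun i : Fin m => r ∈ P i).card)

/-- `G^k`: the game on the first `min k n` players. -/
def truncate (G : CGame R n) (k : ℕ) : CGame R (min k n) where
  actions := fun i => G.actions (Fin.castLE (min_le_right k n) i)
  delay := G.delay

/-- The game reordered so that the player in position `i` is player `σ i`. -/
def reorder (G : CGame R n) (σ : Equiv.Perm (Fin n)) : CGame R n where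
  actions := fun i => G.actions (σ i)
  delay := G.delay

/-- Subgame-perfect outcomes with respect to the order `1, …, n`. -/
def IsSPO : {n : ℕ} → CGame R n → (Fin n → Finset R) → Prop
  | 0, _, _ => True
  | _ + 1, G, A =>
      A 0 ∈ G.actions 0 ∧
      ∃ f : Finset R → (Fin _ → Finset R),
        (∀ a ∈ G.actions 0, IsSPO (G.subgame a) (f a)) ∧
        f (A 0) = Fin.tail A ∧
        ∀ a ∈ G.actions 0,
          G.cost (Fin.cons (A 0) (f (A 0))) 0 ≤ G.cost (Fin.cons a (f a)) 0

/-- `k`-lookahead outcomes with respect to the order `1, …, n`. -/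
def IsKLA (k : ℕ) : {n : ℕ} → CGame R n → (Fin n → Finset R) → Prop
  | 0, _, _ => True
  | n + 1, G, A =>
      (∃ (hk : 0 < min k (n + 1)) (B : Fin (min k (n + 1)) → Finset R),
          IsSPO (G.truncate k) B ∧ B ⟨0, hk⟩ = A 0) ∧
      IsKLA k (G.subgame (A 0)) (Fin.tail A)

/-- `A` is a subgame-perfect outcome of `G` with respect to some order of the players. -/
def IsSPOutcome (G : CGame R n) (A : Fin n → Finset R) : Prop :=
  ∃ σ : Equiv.Perm (Fin n), IsSPO (G.reorder σ) (A ∘ σ)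

/-- `A` is a `k`-lookahead outcome of `G` with respect to some order of the players. -/
def IsKLO (k : ℕ) (G : CGame R n) (A : Fin n → Finset R) : Prop :=
  ∃ σ : Equiv.Perm (Fin n), IsKLA k (G.reorder σ) (A ∘ σ)

/-- The cost of player `i` when only the players in `s` play (profile restricted to `s`). -/
def costOn (G : CGame R n) (s : Finset (Fin n)) (A : Fin n → Finset R) (i : Fin n) : ℝ :=
  ∑ r ∈ A i, G.delay r ((s.filter fun j => r ∈ A j).card)

/-- `G` is generic: in every restriction of the game to a subset of the players,
a player's cost changes whenever his own action changes. -/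
def Generic (G : CGame R n) : Prop :=
  ∀ s : Finset (Fin n), ∀ A B : Fin n → Finset R,
    (∀ i ∈ s, A i ∈ G.actions i) → (∀ i ∈ s, B i ∈ G.actions i) →
    ∀ j ∈ s, A j ≠ B j → G.costOn s A j ≠ G.costOn s B j

/-- Utilitarian social cost. -/
def SC (G : CGame R n) (A : Fin n → Finset R) : ℝ :=
  ∑ i, G.cost A i

/-- Minimum social cost over all outcomes. -/
noncomputable def optSC (G : CGame R n) : ℝ :=
  sInf {y | ∃ A, G.IsOutcome A ∧ y = G.SC A}

/-- The `k`-Lookahead Price of Anarchy. -/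
noncomputable def kLPoA (G : CGame R n) (k : ℕ) : ℝ :=
  sSup {y | ∃ A, IsKLO k G A ∧ y = G.SC A / G.optSC}

/-- The Price of Anarchy. -/
noncomputable def PoA (G : CGame R n) : ℝ :=
  sSup {y | ∃ A, G.IsNash A ∧ y = G.SC A / G.optSC}

/-- Opportunity cost `O_A` of an outcome `A` in a symmetric game with action set `𝒜`. -/
noncomputable def oppCost (G : CGame R n) (𝒜 : Finset (Finset R)) (A : Fin n → Finset R) : ℝ :=
  sInf {y | ∃ P ∈ 𝒜, y = ∑ r ∈ P, G.delay r (G.congestion A r + 1)}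

/-- Worst cost (egalitarian social cost) `W_A` of an outcome `A`. -/
noncomputable def worstCost (G : CGame R n) (A : Fin n → Finset R) : ℝ :=
  sSup {y | ∃ i, y = G.cost A i}

/-- Rosenthal's potential function. -/
def potential (G : CGame R n) (A : Fin n → Finset R) : ℝ :=
  ∑ r : R, ∑ i ∈ Finset.Icc 1 (G.congestion A r), G.delay r i

end CGame
/-- Syntax trees of extension-parallel graphs: a single arc; parallel composition;
series composition of a single arc with an EP graph (arc first or arc last). -/
inductive EPTree : Type
  | edge : EPTree
  | parallel : EPTree → EPTree → EPTree
  | extHead : EPTree → EPTree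
  | extTail : EPTree → EPTree

namespace EPTree

/-- The arcs of an extension-parallel graph. -/
def Arc : EPTree → Type
  | edge => Unit
  | parallel t₁ t₂ => t₁.Arc ⊕ t₂.Arc
  | extHead t => Unit ⊕ t.Arc
  | extTail t => t.Arc ⊕ Unit

def arcDecEq : (t : EPTree) → DecidableEq t.Arc
  | edge => inferInstanceAs (DecidableEq Unit)
  | parallel t₁ t₂ =>
      letI := t₁.arcDecEq; letI := t₂.arcDecEq
      inferInstanceAs (DecidableEq (t₁.Arc ⊕ t₂.Arc))
  | extHead t =>
      letI := t.arcDecEq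
      inferInstanceAs (DecidableEq (Unit ⊕ t.Arc))
  | extTail t =>
      letI := t.arcDecEq
      inferInstanceAs (DecidableEq (t.Arc ⊕ Unit))

instance (t : EPTree) : DecidableEq t.Arc := t.arcDecEq

def arcFintype : (t : EPTree) → Fintype t.Arc
  | edge => inferInstanceAs (Fintype Unit)
  | parallel t₁ t₂ =>
      letI := t₁.arcFintype; letI := t₂.arcFintype
      inferInstanceAs (Fintype (t₁.Arc ⊕ t₂.Arc))
  | extHead t =>
      letI := t.arcFintype
      inferInstanceAs (Fintype (Unit ⊕ t.Arc))
  | extTail t =>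
      letI := t.arcFintype
      inferInstanceAs (Fintype (t.Arc ⊕ Unit))

instance (t : EPTree) : Fintype t.Arc := t.arcFintype

/-- The set of arc sets of directed `o`–`d` paths of an extension-parallel graph. -/
def paths : (t : EPTree) → Finset (Finset t.Arc)
  | edge => {(Finset.univ : Finset Unit)}
  | parallel t₁ t₂ =>
      (t₁.paths.image fun P => P.image Sum.inl) ∪ (t₂.paths.image fun P => P.image Sum.inr)
  | extHead t => t.paths.image fun P => insert (Sum.inl ()) (P.image Sum.inr)
  | extTail t => t.paths.image fun P => insert (Sum.inr ()) (P.image Sum.inl)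

end EPTree

/-- Syntax trees of series-parallel graphs: a single arc; series composition;
parallel composition. -/
inductive SPTree : Type
  | edge : SPTree
  | series : SPTree → SPTree → SPTree
  | parallel : SPTree → SPTree → SPTree

namespace SPTree

/-- The arcs of a series-parallel graph. -/
def Arc : SPTree → Type
  | edge => Unit
  | series t₁ t₂ => t₁.Arc ⊕ t₂.Arc
  | parallel t₁ t₂ => t₁.Arc ⊕ t₂.Arc

def arcDecEq : (t : SPTree) → DecidableEq t.Arc
  | edge => inferInstanceAs (DecidableEq Unit)
  | series t₁ t₂ =>
      letI := t₁.arcDecEq; letI := t₂.arcDecEq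
      inferInstanceAs (DecidableEq (t₁.Arc ⊕ t₂.Arc))
  | parallel t₁ t₂ =>
      letI := t₁.arcDecEq; letI := t₂.arcDecEq
      inferInstanceAs (DecidableEq (t₁.Arc ⊕ t₂.Arc))

instance (t : SPTree) : DecidableEq t.Arc := t.arcDecEq

def arcFintype : (t : SPTree) → Fintype t.Arc
  | edge => inferInstanceAs (Fintype Unit)
  | series t₁ t₂ =>
      letI := t₁.arcFintype; letI := t₂.arcFintype
      inferInstanceAs (Fintype (t₁.Arc ⊕ t₂.Arc))
  | parallel t₁ t₂ =>
      letI := t₁.arcFintype; letI := t₂.arcFintype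
      inferInstanceAs (Fintype (t₁.Arc ⊕ t₂.Arc))

instance (t : SPTree) : Fintype t.Arc := t.arcFintype

/-- The set of arc sets of directed `o`–`d` paths of a series-parallel graph. -/
def paths : (t : SPTree) → Finset (Finset t.Arc)
  | edge => {(Finset.univ : Finset Unit)}
  | series t₁ t₂ =>
      (t₁.paths ×ˢ t₂.paths).image fun p => p.1.image Sum.inl ∪ p.2.image Sum.inr
  | parallel t₁ t₂ =>
      (t₁.paths.image fun P => P.image Sum.inl) ∪ (t₂.paths.image fun P => P.image Sum.inr)

/-- A series-parallel graph is extension-parallel if in every series composition one of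
the two parts is a single arc. -/
def IsEP : SPTree → Prop
  | edge => True
  | series t₁ t₂ => (t₁ = edge ∧ t₂.IsEP) ∨ (t₂ = edge ∧ t₁.IsEP)
  | parallel t₁ t₂ => t₁.IsEP ∧ t₂.IsEP

end SPTree

/-- The symmetric network congestion game with `n` players on an extension-parallel
graph `t` with delay functions `d`. -/
def SNCGep (t : EPTree) (d : t.Arc → ℕ → ℝ) (n : ℕ) : CGame t.Arc n where
  actions := fun _ => t.paths
  delay := d

/-- The symmetric network congestion game with `n` players on a series-parallel
graph `t` with delay functions `d`. -/
def SNCGsp (t : SPTree) (d : t.Arc → ℕ → ℝ) (n : ℕ) : CGame t.Arc n where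
  actions := fun _ => t.paths
  delay := d

/-!
Nestedness of the intersections `A ∩ B`, `A ∩ C` is trivial for a single arc and is preserved
by the three operations building an extension-parallel graph. A parallel
composition puts the paths of the two sides on disjoint arc sets, so two paths from
different sides meet in `∅`. A series extension by an arc `e` replaces every path `P` by
`insert e P`, and `insert e` commutes with intersections and is monotone.
-/

def NestedIntersections {α : Type*} [DecidableEq α] (𝒜 : Finset (Finset α)) : Prop :=
  ∀ A ∈ 𝒜, ∀ B ∈ 𝒜, ∀ C ∈ 𝒜, A ∩ B ⊆ A ∩ C ∨ A ∩ C ⊆ A ∩ B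

namespace NestedIntersections

variable {α β : Type*} [DecidableEq α] [DecidableEq β] {𝒜 : Finset (Finset α)}

theorem singleton (s : Finset α) : NestedIntersections {s} := by
  intro A hA B hB C hC
  rw [Finset.mem_singleton] at hA hB hC
  subst hA hB hC
  exact Or.inl subset_rfl

theorem image (h𝒜 : NestedIntersections 𝒜)
    {f : Finset α → Finset β} (hf : ∀ P Q, f (P ∩ Q) = f P ∩ f Q) :
    NestedIntersections (𝒜.image f) := by
  have hmono : Monotone f := fun P Q hPQ => by
    rw [← Finset.inter_eq_left.2 hPQ, hf]
    exact Finset.inter_subset_right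
  simp only [NestedIntersections, Finset.forall_mem_image, ← hf]
  exact fun P hP Q hQ S hS => (h𝒜 P hP Q hQ S hS).imp (hmono ·) (hmono ·)

theorem union {ℬ : Finset (Finset α)} (h𝒜 : NestedIntersections 𝒜)
    (hℬ : NestedIntersections ℬ) (hdisj : ∀ A ∈ 𝒜, ∀ B ∈ ℬ, Disjoint A B) :
    NestedIntersections (𝒜 ∪ ℬ) := by
  intro A hA B hB C hC
  wlog hA𝒜 : A ∈ 𝒜 generalizing 𝒜 ℬ
  · rw [Finset.union_comm] at hA hB hC
    have hAℬ : A ∈ ℬ := (Finset.mem_union.1 hA).resolve_right hA𝒜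
    exact this hℬ h𝒜 (fun B hB A hA => (hdisj A hA B hB).symm) hA hB hC hAℬ
  have inter_eq_empty : ∀ X ∈ 𝒜 ∪ ℬ, X ∉ 𝒜 → A ∩ X = ∅ := fun X hX hX𝒜 =>
    Finset.disjoint_iff_inter_eq_empty.1
      (hdisj A hA𝒜 X ((Finset.mem_union.1 hX).resolve_left hX𝒜))
  by_cases hB𝒜 : B ∈ 𝒜
  · by_cases hC𝒜 : C ∈ 𝒜
    · exact h𝒜 A hA𝒜 B hB𝒜 C hC𝒜
    · exact Or.inr (by rw [inter_eq_empty C hC hC𝒜]; exact Finset.empty_subset _)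
  · exact Or.inl (by rw [inter_eq_empty B hB hB𝒜]; exact Finset.empty_subset _)

theorem image_image (h𝒜 : NestedIntersections 𝒜) {g : α → β} (hg : Function.Injective g) :
    NestedIntersections (𝒜.image (Finset.image g)) :=
  h𝒜.image fun P Q => P.image_inter Q hg

theorem image_insert_image (h𝒜 : NestedIntersections 𝒜) (e : β) {g : α → β}
    (hg : Function.Injective g) :
    NestedIntersections (𝒜.image fun P => insert e (P.image g)) :=
  h𝒜.image fun P Q => by rw [P.image_inter Q hg, Finset.insert_inter_distrib]

theorem image_inl_union_image_inr {ℬ : Finset (Finset β)} (h𝒜 : NestedIntersections 𝒜)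
    (hℬ : NestedIntersections ℬ) :
    NestedIntersections
      (𝒜.image (Finset.image Sum.inl) ∪ ℬ.image (Finset.image Sum.inr)) := by
  refine (h𝒜.image_image Sum.inl_injective).union (hℬ.image_image Sum.inr_injective) ?_
  simp [Finset.disjoint_left]

end NestedIntersections

theorem Finset.inter_sdiff_eq_empty_of_inter_subset_inter {α : Type*} [DecidableEq α]
    {A B C : Finset α} (h : A ∩ B ⊆ A ∩ C) : A ∩ (B \ C) = ∅ := by
  rw [← Finset.inter_sdiff_assoc, Finset.sdiff_eq_empty_iff_subset]
  exact h.trans Finset.inter_subset_right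

namespace EPTree

theorem nestedIntersections_paths : ∀ t : EPTree, NestedIntersections t.paths
  | edge => NestedIntersections.singleton _
  | parallel t₁ t₂ =>
      (nestedIntersections_paths t₁).image_inl_union_image_inr (nestedIntersections_paths t₂)
  | extHead t => (nestedIntersections_paths t).image_insert_image _ Sum.inr_injective
  | extTail t => (nestedIntersections_paths t).image_insert_image _ Sum.inl_injective

end EPTree

theorem ep_nested_intersections_general (t : EPTree) (A B C : Finset t.Arc)
    (hA : A ∈ t.paths) (hB : B ∈ t.paths) (hC : C ∈ t.paths) :
    (A ∩ B ⊆ A ∩ C ∨ A ∩ C ⊆ A ∩ B) ∧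
    (A ∩ (C \ B) = ∅ ∨ A ∩ (B \ C) = ∅) := by
  have hnested := t.nestedIntersections_paths A hA B hB C hC
  exact ⟨hnested, hnested.symm.imp Finset.inter_sdiff_eq_empty_of_inter_subset_inter
    Finset.inter_sdiff_eq_empty_of_inter_subset_inter⟩

/-- Nested intersections property of extension-parallel graphs: for
pairwise distinct `o`–`d` paths `A, B, C`, the intersections `A ∩ B` and `A ∩ C` are
nested; equivalently, there is no bad configuration. -/
theorem ep_nested_intersections (t : EPTree) (A B C : Finset t.Arc)
    (hA : A ∈ t.paths) (hB : B ∈ t.paths) (hC : C ∈ t.paths)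
    (hAB : A ≠ B) (hAC : A ≠ C) (hBC : B ≠ C) :
    (A ∩ B ⊆ A ∩ C ∨ A ∩ C ⊆ A ∩ B) ∧
    (A ∩ (C \ B) = ∅ ∨ A ∩ (B \ C) = ∅) :=
  ep_nested_intersections_general t A B C hA hB hC
end

section
/- For every symmetric network congestion game on an extension-parallel graph, an outcome is a 1-lookahead outcome if and only if it is a Nash equilibrium. -/
namespace EPNash

open Multiset

variable {R : Type} [DecidableEq R]

/-- Load of resource `r` under a multiset of chosen paths. -/
def load (m : Multiset (Finset R)) (r : R) : ℕ := Multiset.countP (r ∈ ·) m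

/-- Entrant cost of path `P` given current state `m`. -/
def ecost (d : R → ℕ → ℝ) (m : Multiset (Finset R)) (P : Finset R) : ℝ :=
  ∑ r ∈ P, d r (load m r + 1)

/-- Member cost of path `P` (own load included in `m`). -/
def pcost (d : R → ℕ → ℝ) (m : Multiset (Finset R)) (P : Finset R) : ℝ :=
  ∑ r ∈ P, d r (load m r)

/-- Nash state. -/
def NEst (PS : Finset (Finset R)) (d : R → ℕ → ℝ) (m : Multiset (Finset R)) : Prop :=
  (∀ P ∈ m, P ∈ PS) ∧ ∀ P ∈ m, ∀ Q ∈ PS, pcost d m P ≤ ecost d (m.erase P) Q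

/-- `P` is a greedy best response to state `m`. -/
def Greedy (PS : Finset (Finset R)) (d : R → ℕ → ℝ) (m : Multiset (Finset R))
    (P : Finset R) : Prop :=
  P ∈ PS ∧ ∀ Q ∈ PS, ecost d m P ≤ ecost d m Q

@[simp] lemma load_zero (r : R) : load (0 : Multiset (Finset R)) r = 0 := rfl

lemma load_cons (P : Finset R) (m : Multiset (Finset R)) (r : R) :
    load (P ::ₘ m) r = load m r + (if r ∈ P then 1 else 0) := by
  simp [load, Multiset.countP_cons]

lemma load_add (m₁ m₂ : Multiset (Finset R)) (r : R) :
    load (m₁ + m₂) r = load m₁ r + load m₂ r := by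
  simp [load]

lemma load_map (A : Multiset α) (f : α → Finset R) (r : R) :
    load (A.map f) r = Multiset.countP (fun a => r ∈ f a) A := by
  rw [load, Multiset.countP_map]
  exact (Multiset.countP_eq_card_filter _ _).symm

lemma load_erase {P : Finset R} {m : Multiset (Finset R)} (h : P ∈ m) (r : R) :
    load m r = load (m.erase P) r + (if r ∈ P then 1 else 0) := by
  conv_lhs => rw [← Multiset.cons_erase h]
  rw [load_cons]

lemma load_le_load {m₁ m₂ : Multiset (Finset R)} (h : m₁ ≤ m₂) (r : R) :
    load m₁ r ≤ load m₂ r := Multiset.countP_le_of_le _ h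

lemma load_erase_le {P : Finset R} {m : Multiset (Finset R)} (r : R) :
    load (m.erase P) r ≤ load m r := load_le_load (Multiset.erase_le _ _) r

lemma pcost_mem {d : R → ℕ → ℝ} {P : Finset R} {m : Multiset (Finset R)} (h : P ∈ m) :
    pcost d m P = ecost d (m.erase P) P := by
  unfold pcost ecost
  refine Finset.sum_congr rfl fun r hr => ?_
  rw [load_erase h r, if_pos hr]

lemma pcost_cons_self (d : R → ℕ → ℝ) (P : Finset R) (m : Multiset (Finset R)) :
    pcost d (P ::ₘ m) P = ecost d m P := by
  unfold pcost ecost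
  refine Finset.sum_congr rfl fun r hr => ?_
  rw [load_cons, if_pos hr]

lemma ecost_mono {d : R → ℕ → ℝ} (hmono : ∀ r, Monotone (d r))
    {m₁ m₂ : Multiset (Finset R)} (h : ∀ r, load m₁ r ≤ load m₂ r) (P : Finset R) :
    ecost d m₁ P ≤ ecost d m₂ P :=
  Finset.sum_le_sum fun r _ => hmono r (Nat.add_le_add_right (h r) 1)

lemma pcost_mono {d : R → ℕ → ℝ} (hmono : ∀ r, Monotone (d r))
    {m₁ m₂ : Multiset (Finset R)} (h : ∀ r, load m₁ r ≤ load m₂ r) (P : Finset R) :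
    pcost d m₁ P ≤ pcost d m₂ P :=
  Finset.sum_le_sum fun r _ => hmono r (h r)

/-- In a Nash state, every member's cost is at most the entrant cost of any path. -/
lemma NEst.cost_le_ecost {PS : Finset (Finset R)} {d : R → ℕ → ℝ}
    (hmono : ∀ r, Monotone (d r)) {m : Multiset (Finset R)} (hNE : NEst PS d m)
    {P : Finset R} (hP : P ∈ m) {Q : Finset R} (hQ : Q ∈ PS) :
    pcost d m P ≤ ecost d m Q :=
  (hNE.2 P hP Q hQ).trans (ecost_mono hmono (fun r => load_erase_le r) Q)

/-- In a Nash state, every member is a greedy best response to the others. -/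
lemma NEst.greedy_erase {PS : Finset (Finset R)} {d : R → ℕ → ℝ}
    {m : Multiset (Finset R)} (hNE : NEst PS d m) {P : Finset R} (hP : P ∈ m) :
    Greedy PS d (m.erase P) P := by
  refine ⟨hNE.1 P hP, fun Q hQ => ?_⟩
  rw [← pcost_mem hP]
  exact hNE.2 P hP Q hQ

end EPNash


section ExtTransport

variable {R R' : Type} [DecidableEq R] [DecidableEq R']
variable {e : R → R'} (he : Function.Injective e) {c : R'} (hc : ∀ r, e r ≠ c)

/-- extension map on paths -/
def extF (e : R → R') (c : R') (P : Finset R) : Finset R' := insert c (P.image e)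

include he hc

lemma extF_inj : Function.Injective (extF e c) := by
  intro P Q h
  have himg : P.image e = Q.image e := by
    ext x
    constructor
    · intro hx
      have hx' : x ∈ extF e c Q := h ▸ Finset.mem_insert_of_mem hx
      rcases Finset.mem_insert.mp hx' with h1 | h1
      · obtain ⟨r, _, rfl⟩ := Finset.mem_image.mp hx
        exact absurd h1 (hc r)
      · exact h1
    · intro hx
      have hx' : x ∈ extF e c P := h ▸ Finset.mem_insert_of_mem hx
      rcases Finset.mem_insert.mp hx' with h1 | h1
      · obtain ⟨r, _, rfl⟩ := Finset.mem_image.mp hx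
        exact absurd h1 (hc r)
      · exact h1
  exact Finset.image_injective he himg

lemma mem_extF_e {P : Finset R} {r : R} : e r ∈ extF e c P ↔ r ∈ P := by
  simp only [extF, Finset.mem_insert, Finset.mem_image]
  constructor
  · rintro (h | ⟨s, hs, hsr⟩)
    · exact absurd h (hc r)
    · exact he hsr ▸ hs
  · intro h; exact Or.inr ⟨r, h, rfl⟩

lemma load_extF_e (m : Multiset (Finset R)) (r : R) :
    EPNash.load (m.map (extF e c)) (e r) = EPNash.load m r := by
  rw [EPNash.load_map]
  refine Multiset.countP_congr rfl fun P _ => by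
    simp [mem_extF_e he hc]

lemma load_extF_c (m : Multiset (Finset R)) :
    EPNash.load (m.map (extF e c)) c = Multiset.card m := by
  rw [EPNash.load_map]
  exact Multiset.countP_eq_card.mpr fun P _ => Finset.mem_insert_self c _

lemma ecost_extF (d' : R' → ℕ → ℝ) (m : Multiset (Finset R)) (Q : Finset R) :
    EPNash.ecost d' (m.map (extF e c)) (extF e c Q)
      = d' c (Multiset.card m + 1) + EPNash.ecost (fun r y => d' (e r) y) m Q := by
  unfold EPNash.ecost
  rw [extF, Finset.sum_insert (by
    simp only [Finset.mem_image]; rintro ⟨r, _, hr⟩; exact hc r hr)]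
  rw [load_extF_c he hc]
  congr 1
  rw [Finset.sum_image (fun a _ b _ h => he h)]
  exact Finset.sum_congr rfl fun r _ => by rw [load_extF_e he hc]

lemma pcost_extF (d' : R' → ℕ → ℝ) (m : Multiset (Finset R)) (Q : Finset R) :
    EPNash.pcost d' (m.map (extF e c)) (extF e c Q)
      = d' c (Multiset.card m) + EPNash.pcost (fun r y => d' (e r) y) m Q := by
  unfold EPNash.pcost
  rw [extF, Finset.sum_insert (by
    simp only [Finset.mem_image]; rintro ⟨r, _, hr⟩; exact hc r hr)]
  rw [load_extF_c he hc]
  congr 1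
  rw [Finset.sum_image (fun a _ b _ h => he h)]
  exact Finset.sum_congr rfl fun r _ => by rw [load_extF_e he hc]

lemma NEst_extF (PS : Finset (Finset R)) (d' : R' → ℕ → ℝ) (m : Multiset (Finset R)) :
    EPNash.NEst (PS.image (extF e c)) d' (m.map (extF e c))
      ↔ EPNash.NEst PS (fun r y => d' (e r) y) m := by
  constructor
  · rintro ⟨hmem, hineq⟩
    constructor
    · intro P hP
      have := hmem (extF e c P) (Multiset.mem_map_of_mem _ hP)
      obtain ⟨Q, hQ, hQP⟩ := Finset.mem_image.mp this
      exact (extF_inj he hc hQP) ▸ hQ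
    · intro P hP Q hQ
      have h := hineq (extF e c P) (Multiset.mem_map_of_mem _ hP)
        (extF e c Q) (Finset.mem_image_of_mem _ hQ)
      rw [pcost_extF he hc, ← Multiset.map_erase _ (extF_inj he hc),
        ecost_extF he hc] at h
      rw [Multiset.card_erase_of_mem hP] at h
      have hcard : (Multiset.card m).pred + 1 = Multiset.card m :=
        Nat.succ_pred_eq_of_pos (Multiset.card_pos_iff_exists_mem.mpr ⟨P, hP⟩)
      rw [hcard] at h
      exact le_of_add_le_add_left h
  · rintro ⟨hmem, hineq⟩
    constructor
    · intro P' hP'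
      obtain ⟨P, hP, rfl⟩ := Multiset.mem_map.mp hP'
      exact Finset.mem_image_of_mem _ (hmem P hP)
    · intro P' hP' Q' hQ'
      obtain ⟨P, hP, rfl⟩ := Multiset.mem_map.mp hP'
      obtain ⟨Q, hQ, rfl⟩ := Finset.mem_image.mp hQ'
      rw [pcost_extF he hc, ← Multiset.map_erase _ (extF_inj he hc),
        ecost_extF he hc, Multiset.card_erase_of_mem hP]
      have hcard : (Multiset.card m).pred + 1 = Multiset.card m :=
        Nat.succ_pred_eq_of_pos (Multiset.card_pos_iff_exists_mem.mpr ⟨P, hP⟩)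
      rw [hcard]
      exact add_le_add_right (hineq P hP Q hQ) _

lemma Greedy_extF (PS : Finset (Finset R)) (d' : R' → ℕ → ℝ) (m : Multiset (Finset R))
    (P : Finset R) :
    EPNash.Greedy (PS.image (extF e c)) d' (m.map (extF e c)) (extF e c P)
      ↔ EPNash.Greedy PS (fun r y => d' (e r) y) m P := by
  constructor
  · rintro ⟨hmem, hineq⟩
    obtain ⟨P0, hP0, hP0e⟩ := Finset.mem_image.mp hmem
    refine ⟨(extF_inj he hc hP0e) ▸ hP0, fun Q hQ => ?_⟩
    have h := hineq (extF e c Q) (Finset.mem_image_of_mem _ hQ)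
    rw [ecost_extF he hc, ecost_extF he hc] at h
    exact le_of_add_le_add_left h
  · rintro ⟨hmem, hineq⟩
    refine ⟨Finset.mem_image_of_mem _ hmem, fun Q' hQ' => ?_⟩
    obtain ⟨Q, hQ, rfl⟩ := Finset.mem_image.mp hQ'
    rw [ecost_extF he hc, ecost_extF he hc]
    exact add_le_add_right (hineq Q hQ) _

lemma split_extF (PS : Finset (Finset R)) (m' : Multiset (Finset R'))
    (h : ∀ P ∈ m', P ∈ PS.image (extF e c)) :
    ∃ m : Multiset (Finset R), m' = m.map (extF e c) := by
  induction m' using Multiset.induction with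
  | empty => exact ⟨0, rfl⟩
  | cons P' m' ih =>
    obtain ⟨m, rfl⟩ := ih fun P hP => h P (Multiset.mem_cons_of_mem hP)
    obtain ⟨P, _, rfl⟩ := Finset.mem_image.mp (h P' (Multiset.mem_cons_self _ _))
    exact ⟨P ::ₘ m, by rw [Multiset.map_cons]⟩

end ExtTransport


section ParTransport

variable {R1 R2 : Type} [DecidableEq R1] [DecidableEq R2]

/-- left embedding of paths -/
def parF1 (P : Finset R1) : Finset (R1 ⊕ R2) := P.image Sum.inl
/-- right embedding of paths -/
def parF2 (P : Finset R2) : Finset (R1 ⊕ R2) := P.image Sum.inr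

lemma parF1_inj : Function.Injective (parF1 (R1 := R1) (R2 := R2)) :=
  fun _ _ h => Finset.image_injective Sum.inl_injective h

lemma parF2_inj : Function.Injective (parF2 (R1 := R1) (R2 := R2)) :=
  fun _ _ h => Finset.image_injective Sum.inr_injective h

lemma load_parF1_inl (m : Multiset (Finset R1)) (r : R1) :
    EPNash.load (m.map (parF1 (R2 := R2))) (Sum.inl r) = EPNash.load m r := by
  rw [EPNash.load_map]
  exact Multiset.countP_congr rfl fun P _ => by simp [parF1]

lemma load_parF2_inr (m : Multiset (Finset R2)) (r : R2) :
    EPNash.load (m.map (parF2 (R1 := R1))) (Sum.inr r) = EPNash.load m r := by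
  rw [EPNash.load_map]
  exact Multiset.countP_congr rfl fun P _ => by simp [parF2]

lemma load_parF1_inr (m : Multiset (Finset R1)) (r : R2) :
    EPNash.load (m.map (parF1 (R2 := R2))) (Sum.inr r) = 0 := by
  rw [EPNash.load_map]
  exact Multiset.countP_eq_zero.mpr fun P _ => by simp [parF1]

lemma load_parF2_inl (m : Multiset (Finset R2)) (r : R1) :
    EPNash.load (m.map (parF2 (R1 := R1))) (Sum.inl r) = 0 := by
  rw [EPNash.load_map]
  exact Multiset.countP_eq_zero.mpr fun P _ => by simp [parF2]

variable (d : (R1 ⊕ R2) → ℕ → ℝ) (m1 : Multiset (Finset R1)) (m2 : Multiset (Finset R2))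

lemma load_par_inl (r : R1) :
    EPNash.load (m1.map parF1 + m2.map parF2) (Sum.inl r) = EPNash.load m1 r := by
  rw [EPNash.load_add, load_parF1_inl, load_parF2_inl, Nat.add_zero]

lemma load_par_inr (r : R2) :
    EPNash.load (m1.map parF1 + m2.map parF2) (Sum.inr r) = EPNash.load m2 r := by
  rw [EPNash.load_add, load_parF2_inr, load_parF1_inr, Nat.zero_add]

lemma ecost_par_F1 (Q : Finset R1) :
    EPNash.ecost d (m1.map parF1 + m2.map parF2) (parF1 Q)
      = EPNash.ecost (fun r y => d (Sum.inl r) y) m1 Q := by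
  have himg : parF1 (R2 := R2) Q = Q.image Sum.inl := rfl
  unfold EPNash.ecost
  rw [himg, Finset.sum_image (fun a _ b _ h => Sum.inl_injective h)]
  refine Finset.sum_congr rfl fun r hr => ?_
  rw [load_par_inl]

lemma ecost_par_F2 (Q : Finset R2) :
    EPNash.ecost d (m1.map parF1 + m2.map parF2) (parF2 Q)
      = EPNash.ecost (fun r y => d (Sum.inr r) y) m2 Q := by
  have himg : parF2 (R1 := R1) Q = Q.image Sum.inr := rfl
  unfold EPNash.ecost
  rw [himg, Finset.sum_image (fun a _ b _ h => Sum.inr_injective h)]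
  refine Finset.sum_congr rfl fun r hr => ?_
  rw [load_par_inr]

lemma pcost_par_F1 (Q : Finset R1) :
    EPNash.pcost d (m1.map parF1 + m2.map parF2) (parF1 Q)
      = EPNash.pcost (fun r y => d (Sum.inl r) y) m1 Q := by
  have himg : parF1 (R2 := R2) Q = Q.image Sum.inl := rfl
  unfold EPNash.pcost
  rw [himg, Finset.sum_image (fun a _ b _ h => Sum.inl_injective h)]
  refine Finset.sum_congr rfl fun r hr => ?_
  rw [load_par_inl]

lemma pcost_par_F2 (Q : Finset R2) :
    EPNash.pcost d (m1.map parF1 + m2.map parF2) (parF2 Q)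
      = EPNash.pcost (fun r y => d (Sum.inr r) y) m2 Q := by
  have himg : parF2 (R1 := R1) Q = Q.image Sum.inr := rfl
  unfold EPNash.pcost
  rw [himg, Finset.sum_image (fun a _ b _ h => Sum.inr_injective h)]
  refine Finset.sum_congr rfl fun r hr => ?_
  rw [load_par_inr]

lemma erase_par_F1 {P : Finset R1} (hP : P ∈ m1) :
    (m1.map parF1 + m2.map (parF2 (R1 := R1))).erase (parF1 P)
      = (m1.erase P).map parF1 + m2.map parF2 := by
  rw [Multiset.erase_add_left_pos _ (Multiset.mem_map_of_mem _ hP),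
    ← Multiset.map_erase _ parF1_inj]

lemma erase_par_F2 {P : Finset R2} (hP : P ∈ m2) :
    (m1.map (parF1 (R2 := R2)) + m2.map parF2).erase (parF2 P)
      = m1.map parF1 + (m2.erase P).map parF2 := by
  rw [Multiset.erase_add_right_pos _ (Multiset.mem_map_of_mem _ hP),
    ← Multiset.map_erase _ parF2_inj]

lemma split_par (PS1 : Finset (Finset R1)) (PS2 : Finset (Finset R2))
    (m : Multiset (Finset (R1 ⊕ R2)))
    (h : ∀ P ∈ m, P ∈ PS1.image parF1 ∪ PS2.image parF2) :
    ∃ (m1 : Multiset (Finset R1)) (m2 : Multiset (Finset R2)),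
      m = m1.map parF1 + m2.map parF2 := by
  induction m using Multiset.induction with
  | empty => exact ⟨0, 0, rfl⟩
  | cons P m ih =>
    obtain ⟨m1, m2, rfl⟩ := ih fun Q hQ => h Q (Multiset.mem_cons_of_mem hQ)
    rcases Finset.mem_union.mp (h P (Multiset.mem_cons_self _ _)) with hP | hP
    · obtain ⟨P0, _, rfl⟩ := Finset.mem_image.mp hP
      exact ⟨P0 ::ₘ m1, m2, by rw [Multiset.map_cons, Multiset.cons_add]⟩
    · obtain ⟨P0, _, rfl⟩ := Finset.mem_image.mp hP
      exact ⟨m1, P0 ::ₘ m2, by rw [Multiset.map_cons, Multiset.add_cons]⟩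

end ParTransport


namespace EPNash

lemma NEst_zero (PS : Finset (Finset R)) (d : R → ℕ → ℝ) [DecidableEq R] :
    NEst PS d 0 := ⟨fun P hP => absurd hP (Multiset.notMem_zero P), fun P hP => absurd hP (Multiset.notMem_zero P)⟩

lemma load_le_cons [DecidableEq R] (P : Finset R) (m : Multiset (Finset R)) (r : R) :
    load m r ≤ load (P ::ₘ m) r := by rw [load_cons]; omega

end EPNash

lemma EPTree.paths_nonempty : ∀ (t : EPTree), ∀ P ∈ t.paths, P.Nonempty := by
  intro t
  induction t with
  | edge =>
    intro P hP
    replace hP : P = (Finset.univ : Finset Unit) := Finset.mem_singleton.mp hP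
    exact hP ▸ ⟨(), Finset.mem_univ ()⟩
  | parallel t₁ t₂ ih₁ ih₂ =>
    intro P hP
    rcases Finset.mem_union.mp hP with h | h
    · obtain ⟨Q, hQ, rfl⟩ := Finset.mem_image.mp h
      exact (ih₁ Q hQ).image _
    · obtain ⟨Q, hQ, rfl⟩ := Finset.mem_image.mp h
      exact (ih₂ Q hQ).image _
  | extHead t ih =>
    intro P hP
    obtain ⟨Q, _, rfl⟩ := Finset.mem_image.mp hP
    exact Finset.insert_nonempty _ _
  | extTail t ih =>
    intro P hP
    obtain ⟨Q, _, rfl⟩ := Finset.mem_image.mp hP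
    exact Finset.insert_nonempty _ _

section ParNEst

variable {R1 R2 : Type} [DecidableEq R1] [DecidableEq R2]
variable (PS1 : Finset (Finset R1)) (PS2 : Finset (Finset R2))
variable (d : (R1 ⊕ R2) → ℕ → ℝ) (m1 : Multiset (Finset R1)) (m2 : Multiset (Finset R2))

lemma parF1_mem_union (hne2 : ∀ P ∈ PS2, P.Nonempty) {P : Finset R1}
    (h : parF1 P ∈ PS1.image parF1 ∪ PS2.image parF2) : P ∈ PS1 := by
  rcases Finset.mem_union.mp h with h | h
  · obtain ⟨Q, hQ, hQP⟩ := Finset.mem_image.mp h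
    exact (parF1_inj hQP) ▸ hQ
  · obtain ⟨Q, hQ, hQP⟩ := Finset.mem_image.mp h
    obtain ⟨q, hq⟩ := hne2 Q hQ
    have : Sum.inr q ∈ parF1 P := hQP ▸ Finset.mem_image_of_mem _ hq
    obtain ⟨a, _, ha⟩ := Finset.mem_image.mp this
    exact absurd ha (by simp)

lemma parF2_mem_union (hne1 : ∀ P ∈ PS1, P.Nonempty) {P : Finset R2}
    (h : parF2 P ∈ PS1.image parF1 ∪ PS2.image parF2) : P ∈ PS2 := by
  rcases Finset.mem_union.mp h with h | h
  · obtain ⟨Q, hQ, hQP⟩ := Finset.mem_image.mp h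
    obtain ⟨q, hq⟩ := hne1 Q hQ
    have : Sum.inl q ∈ parF2 P := hQP ▸ Finset.mem_image_of_mem _ hq
    obtain ⟨a, _, ha⟩ := Finset.mem_image.mp this
    exact absurd ha (by simp)
  · obtain ⟨Q, hQ, hQP⟩ := Finset.mem_image.mp h
    exact (parF2_inj hQP) ▸ hQ

lemma NEst_par (hne1 : ∀ P ∈ PS1, P.Nonempty) (hne2 : ∀ P ∈ PS2, P.Nonempty) :
    EPNash.NEst (PS1.image parF1 ∪ PS2.image parF2) d (m1.map parF1 + m2.map parF2)
      ↔ EPNash.NEst PS1 (fun r y => d (Sum.inl r) y) m1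
        ∧ EPNash.NEst PS2 (fun r y => d (Sum.inr r) y) m2
        ∧ (∀ P ∈ m1, ∀ Q ∈ PS2, EPNash.pcost (fun r y => d (Sum.inl r) y) m1 P
            ≤ EPNash.ecost (fun r y => d (Sum.inr r) y) m2 Q)
        ∧ (∀ P ∈ m2, ∀ Q ∈ PS1, EPNash.pcost (fun r y => d (Sum.inr r) y) m2 P
            ≤ EPNash.ecost (fun r y => d (Sum.inl r) y) m1 Q) := by
  constructor
  · rintro ⟨hmem, hineq⟩
    have hmem1 : ∀ P ∈ m1, P ∈ PS1 := fun P hP => parF1_mem_union PS1 PS2 hne2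
      (hmem _ (Multiset.mem_add.mpr (Or.inl (Multiset.mem_map_of_mem _ hP))))
    have hmem2 : ∀ P ∈ m2, P ∈ PS2 := fun P hP => parF2_mem_union PS1 PS2 hne1
      (hmem _ (Multiset.mem_add.mpr (Or.inr (Multiset.mem_map_of_mem _ hP))))
    refine ⟨⟨hmem1, fun P hP Q hQ => ?_⟩, ⟨hmem2, fun P hP Q hQ => ?_⟩,
      fun P hP Q hQ => ?_, fun P hP Q hQ => ?_⟩
    · have h := hineq (parF1 P) (Multiset.mem_add.mpr (Or.inl (Multiset.mem_map_of_mem _ hP)))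
        (parF1 Q) (Finset.mem_union_left _ (Finset.mem_image_of_mem _ hQ))
      rwa [pcost_par_F1, erase_par_F1 _ _ hP, ecost_par_F1] at h
    · have h := hineq (parF2 P) (Multiset.mem_add.mpr (Or.inr (Multiset.mem_map_of_mem _ hP)))
        (parF2 Q) (Finset.mem_union_right _ (Finset.mem_image_of_mem _ hQ))
      rwa [pcost_par_F2, erase_par_F2 _ _ hP, ecost_par_F2] at h
    · have h := hineq (parF1 P) (Multiset.mem_add.mpr (Or.inl (Multiset.mem_map_of_mem _ hP)))
        (parF2 Q) (Finset.mem_union_right _ (Finset.mem_image_of_mem _ hQ))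
      rwa [pcost_par_F1, erase_par_F1 _ _ hP, ecost_par_F2] at h
    · have h := hineq (parF2 P) (Multiset.mem_add.mpr (Or.inr (Multiset.mem_map_of_mem _ hP)))
        (parF1 Q) (Finset.mem_union_left _ (Finset.mem_image_of_mem _ hQ))
      rwa [pcost_par_F2, erase_par_F2 _ _ hP, ecost_par_F1] at h
  · rintro ⟨⟨hmem1, h11⟩, ⟨hmem2, h22⟩, h12, h21⟩
    constructor
    · intro P hP
      rcases Multiset.mem_add.mp hP with h | h
      · obtain ⟨Q, hQ, rfl⟩ := Multiset.mem_map.mp h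
        exact Finset.mem_union_left _ (Finset.mem_image_of_mem _ (hmem1 Q hQ))
      · obtain ⟨Q, hQ, rfl⟩ := Multiset.mem_map.mp h
        exact Finset.mem_union_right _ (Finset.mem_image_of_mem _ (hmem2 Q hQ))
    · intro P hP Q hQ
      rcases Multiset.mem_add.mp hP with h | h
      · obtain ⟨P0, hP0, rfl⟩ := Multiset.mem_map.mp h
        rw [pcost_par_F1, erase_par_F1 _ _ hP0]
        rcases Finset.mem_union.mp hQ with hq | hq
        · obtain ⟨Q0, hQ0, rfl⟩ := Finset.mem_image.mp hq
          rw [ecost_par_F1]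
          exact h11 P0 hP0 Q0 hQ0
        · obtain ⟨Q0, hQ0, rfl⟩ := Finset.mem_image.mp hq
          rw [ecost_par_F2]
          exact h12 P0 hP0 Q0 hQ0
      · obtain ⟨P0, hP0, rfl⟩ := Multiset.mem_map.mp h
        rw [pcost_par_F2, erase_par_F2 _ _ hP0]
        rcases Finset.mem_union.mp hQ with hq | hq
        · obtain ⟨Q0, hQ0, rfl⟩ := Finset.mem_image.mp hq
          rw [ecost_par_F1]
          exact h21 P0 hP0 Q0 hQ0
        · obtain ⟨Q0, hQ0, rfl⟩ := Finset.mem_image.mp hq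
          rw [ecost_par_F2]
          exact h22 P0 hP0 Q0 hQ0

end ParNEst


open EPNash in
/-- Adding a greedy best response to a Nash state of an EP game keeps it Nash,
and all resulting member costs are at most the entrant's cost. -/
theorem EP_L1 (t : EPTree) :
    ∀ (d : t.Arc → ℕ → ℝ), (∀ r, Monotone (d r)) →
    ∀ m : Multiset (Finset t.Arc), NEst t.paths d m →
    ∀ P : Finset t.Arc, Greedy t.paths d m P →
      NEst t.paths d (P ::ₘ m) ∧
        ∀ Q ∈ (P ::ₘ m), pcost d (P ::ₘ m) Q ≤ ecost d m P := by
  induction t with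
  | edge =>
    intro d _ m hNE P hG
    have hmem : ∀ Q ∈ (P ::ₘ m), Q ∈ EPTree.edge.paths := by
      intro Q hQ
      rcases Multiset.mem_cons.mp hQ with rfl | hQ
      · exact hG.1
      · exact hNE.1 Q hQ
    have huniv : ∀ Q ∈ (P ::ₘ m), Q = (Finset.univ : Finset Unit) := by
      intro Q hQ
      exact Finset.mem_singleton.mp (hmem Q hQ)
    constructor
    · refine ⟨hmem, fun S hS Q hQ => ?_⟩
      have hQu : Q = Finset.univ := Finset.mem_singleton.mp hQ
      have hSu := huniv S hS
      subst hQu; subst hSu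
      exact le_of_eq (pcost_mem hS)
    · intro Q hQ
      have hQu := huniv Q hQ
      have hPu := huniv P (Multiset.mem_cons_self _ _)
      subst hQu
      rw [← hPu, pcost_cons_self]
  | parallel t1 t2 ih1 ih2 =>
    intro d hmono m' hNE P' hG
    have hne1 := EPTree.paths_nonempty t1
    have hne2 := EPTree.paths_nonempty t2
    have hps : (t1.parallel t2).paths = t1.paths.image parF1 ∪ t2.paths.image parF2 := rfl
    rw [hps] at hNE hG ⊢
    obtain ⟨m1, m2, rfl⟩ := split_par t1.paths t2.paths m' hNE.1
    set d1 : t1.Arc → ℕ → ℝ := fun r y => d (Sum.inl r) y with hd1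
    set d2 : t2.Arc → ℕ → ℝ := fun r y => d (Sum.inr r) y with hd2
    have hm1 : ∀ r, Monotone (d1 r) := fun r => hmono (Sum.inl r)
    have hm2 : ∀ r, Monotone (d2 r) := fun r => hmono (Sum.inr r)
    have hdec := (NEst_par t1.paths t2.paths d m1 m2 hne1 hne2).mp hNE
    obtain ⟨hNE1, hNE2, h12, h21⟩ := hdec
    rcases Finset.mem_union.mp hG.1 with hmem | hmem
    · -- greedy path on the left side
      obtain ⟨P, hPps, rfl⟩ := Finset.mem_image.mp hmem
      have hgr1 : Greedy t1.paths d1 m1 P := by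
        refine ⟨hPps, fun Q hQ => ?_⟩
        have := hG.2 (parF1 Q) (Finset.mem_union_left _ (Finset.mem_image_of_mem _ hQ))
        erw [ecost_par_F1, ecost_par_F1] at this; exact this
      have hcrossg : ∀ Q ∈ t2.paths, ecost d1 m1 P ≤ ecost d2 m2 Q := by
        intro Q hQ
        have := hG.2 (parF2 Q) (Finset.mem_union_right _ (Finset.mem_image_of_mem _ hQ))
        erw [ecost_par_F1, ecost_par_F2] at this; exact this
      obtain ⟨hNE1', hbd1⟩ := ih1 d1 hm1 m1 hNE1 P hgr1
      have hsplit : parF1 P ::ₘ (m1.map parF1 + m2.map parF2)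
          = (P ::ₘ m1).map parF1 + m2.map parF2 := by
        rw [Multiset.map_cons, Multiset.cons_add]
      erw [hsplit]
      have hEP : ecost d (m1.map parF1 + m2.map parF2) (parF1 P) = ecost d1 m1 P :=
        ecost_par_F1 _ _ _ _
      constructor
      · refine (NEst_par t1.paths t2.paths d (P ::ₘ m1) m2 hne1 hne2).mpr
          ⟨hNE1', hNE2, fun S hS Q hQ => ?_, fun S hS Q hQ => ?_⟩
        · exact (hbd1 S hS).trans (hcrossg Q hQ)
        · exact (h21 S hS Q hQ).trans (ecost_mono hm1 (fun r => load_le_cons P m1 r) Q)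
      · intro Q hQ
        erw [hEP]
        rcases Multiset.mem_add.mp hQ with h | h
        · obtain ⟨Q0, hQ0, rfl⟩ := Multiset.mem_map.mp h
          erw [pcost_par_F1]
          exact hbd1 Q0 hQ0
        · obtain ⟨Q0, hQ0, rfl⟩ := Multiset.mem_map.mp h
          erw [pcost_par_F2]
          exact h21 Q0 hQ0 P hPps
    · -- greedy path on the right side
      obtain ⟨P, hPps, rfl⟩ := Finset.mem_image.mp hmem
      have hgr2 : Greedy t2.paths d2 m2 P := by
        refine ⟨hPps, fun Q hQ => ?_⟩
        have := hG.2 (parF2 Q) (Finset.mem_union_right _ (Finset.mem_image_of_mem _ hQ))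
        erw [ecost_par_F2, ecost_par_F2] at this; exact this
      have hcrossg : ∀ Q ∈ t1.paths, ecost d2 m2 P ≤ ecost d1 m1 Q := by
        intro Q hQ
        have := hG.2 (parF1 Q) (Finset.mem_union_left _ (Finset.mem_image_of_mem _ hQ))
        erw [ecost_par_F2, ecost_par_F1] at this; exact this
      obtain ⟨hNE2', hbd2⟩ := ih2 d2 hm2 m2 hNE2 P hgr2
      have hsplit : parF2 P ::ₘ (m1.map parF1 + m2.map parF2)
          = m1.map parF1 + (P ::ₘ m2).map parF2 := by
        rw [Multiset.map_cons, Multiset.add_cons]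
      erw [hsplit]
      have hEP : ecost d (m1.map parF1 + m2.map parF2) (parF2 P) = ecost d2 m2 P :=
        ecost_par_F2 _ _ _ _
      constructor
      · refine (NEst_par t1.paths t2.paths d m1 (P ::ₘ m2) hne1 hne2).mpr
          ⟨hNE1, hNE2', fun S hS Q hQ => ?_, fun S hS Q hQ => ?_⟩
        · exact (h12 S hS Q hQ).trans (ecost_mono hm2 (fun r => load_le_cons P m2 r) Q)
        · exact (hbd2 S hS).trans (hcrossg Q hQ)
      · intro Q hQ
        erw [hEP]
        rcases Multiset.mem_add.mp hQ with h | h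
        · obtain ⟨Q0, hQ0, rfl⟩ := Multiset.mem_map.mp h
          erw [pcost_par_F1]
          exact h12 Q0 hQ0 P hPps
        · obtain ⟨Q0, hQ0, rfl⟩ := Multiset.mem_map.mp h
          erw [pcost_par_F2]
          exact hbd2 Q0 hQ0
  | extHead t ih =>
    intro d hmono m' hNE P' hG
    have he : Function.Injective (Sum.inr : t.Arc → Unit ⊕ t.Arc) := Sum.inr_injective
    have hc : ∀ r : t.Arc, (Sum.inr r : Unit ⊕ t.Arc) ≠ Sum.inl () := by simp
    have hps : (EPTree.extHead t).paths = t.paths.image (extF Sum.inr (Sum.inl ())) := rfl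
    obtain ⟨m, rfl⟩ := split_extF he hc t.paths m' (hps ▸ hNE.1)
    obtain ⟨P, hPps, rfl⟩ := Finset.mem_image.mp (hps ▸ hG.1)
    set dt : t.Arc → ℕ → ℝ := fun r y => d (Sum.inr r) y with hdt
    have hmt : ∀ r, Monotone (dt r) := fun r => hmono (Sum.inr r)
    have hNEt : NEst t.paths dt m := (NEst_extF he hc t.paths d m).mp (hps ▸ hNE)
    have hGt : Greedy t.paths dt m P :=
      (Greedy_extF he hc t.paths d m P).mp (hps ▸ hG)
    obtain ⟨hNEt', hbd⟩ := ih dt hmt m hNEt P hGt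
    have hmapcons : extF Sum.inr (Sum.inl ()) P ::ₘ m.map (extF Sum.inr (Sum.inl ()))
        = (P ::ₘ m).map (extF Sum.inr (Sum.inl ())) := (Multiset.map_cons _ _ _).symm
    erw [hmapcons]
    constructor
    · rw [hps]
      exact (NEst_extF he hc t.paths d (P ::ₘ m)).mpr hNEt'
    · intro Q' hQ'
      obtain ⟨Q, hQ, rfl⟩ := Multiset.mem_map.mp hQ'
      erw [pcost_extF he hc, ecost_extF he hc, Multiset.card_cons]
      exact add_le_add_right (hbd Q hQ) _
  | extTail t ih =>
    intro d hmono m' hNE P' hG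
    have he : Function.Injective (Sum.inl : t.Arc → t.Arc ⊕ Unit) := Sum.inl_injective
    have hc : ∀ r : t.Arc, (Sum.inl r : t.Arc ⊕ Unit) ≠ Sum.inr () := by simp
    have hps : (EPTree.extTail t).paths = t.paths.image (extF Sum.inl (Sum.inr ())) := rfl
    obtain ⟨m, rfl⟩ := split_extF he hc t.paths m' (hps ▸ hNE.1)
    obtain ⟨P, hPps, rfl⟩ := Finset.mem_image.mp (hps ▸ hG.1)
    set dt : t.Arc → ℕ → ℝ := fun r y => d (Sum.inl r) y with hdt
    have hmt : ∀ r, Monotone (dt r) := fun r => hmono (Sum.inl r)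
    have hNEt : NEst t.paths dt m := (NEst_extF he hc t.paths d m).mp (hps ▸ hNE)
    have hGt : Greedy t.paths dt m P :=
      (Greedy_extF he hc t.paths d m P).mp (hps ▸ hG)
    obtain ⟨hNEt', hbd⟩ := ih dt hmt m hNEt P hGt
    have hmapcons : extF Sum.inl (Sum.inr ()) P ::ₘ m.map (extF Sum.inl (Sum.inr ()))
        = (P ::ₘ m).map (extF Sum.inl (Sum.inr ())) := (Multiset.map_cons _ _ _).symm
    erw [hmapcons]
    constructor
    · rw [hps]
      exact (NEst_extF he hc t.paths d (P ::ₘ m)).mpr hNEt'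
    · intro Q' hQ'
      obtain ⟨Q, hQ, rfl⟩ := Multiset.mem_map.mp hQ'
      erw [pcost_extF he hc, ecost_extF he hc, Multiset.card_cons]
      exact add_le_add_right (hbd Q hQ) _


open EPNash in
/-- From a nonempty Nash state of an EP game one can remove a maximum-cost member
and stay Nash. -/
theorem EP_L2 (t : EPTree) :
    ∀ (d : t.Arc → ℕ → ℝ), (∀ r, Monotone (d r)) →
    ∀ m : Multiset (Finset t.Arc), m ≠ 0 → NEst t.paths d m →
      ∃ P ∈ m, NEst t.paths d (m.erase P) ∧
        ∀ Q ∈ m, pcost d m Q ≤ pcost d m P := by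
  induction t with
  | edge =>
    intro d _ m hm0 hNE
    obtain ⟨P, hP⟩ := Multiset.exists_mem_of_ne_zero hm0
    refine ⟨P, hP, ⟨fun Q hQ => hNE.1 Q (Multiset.mem_of_mem_erase hQ),
      fun S hS Q hQ => ?_⟩, fun Q hQ => ?_⟩
    · have hSu : S = (Finset.univ : Finset Unit) := by
        exact Finset.mem_singleton.mp (hNE.1 S (Multiset.mem_of_mem_erase hS))
      have hQu : Q = (Finset.univ : Finset Unit) := by
        exact Finset.mem_singleton.mp (hQ)
      subst hSu; subst hQu
      exact le_of_eq (pcost_mem hS)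
    · have hQu : Q = (Finset.univ : Finset Unit) := by
        exact Finset.mem_singleton.mp (hNE.1 Q hQ)
      have hPu : P = (Finset.univ : Finset Unit) := by
        exact Finset.mem_singleton.mp (hNE.1 P hP)
      rw [hQu, hPu]
  | parallel t1 t2 ih1 ih2 =>
    intro d hmono m' hm0 hNE
    have hne1 := EPTree.paths_nonempty t1
    have hne2 := EPTree.paths_nonempty t2
    have hps : (t1.parallel t2).paths = t1.paths.image parF1 ∪ t2.paths.image parF2 := rfl
    rw [hps] at hNE ⊢
    obtain ⟨m1, m2, rfl⟩ := split_par t1.paths t2.paths m' hNE.1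
    set d1 : t1.Arc → ℕ → ℝ := fun r y => d (Sum.inl r) y with hd1
    set d2 : t2.Arc → ℕ → ℝ := fun r y => d (Sum.inr r) y with hd2
    have hm1 : ∀ r, Monotone (d1 r) := fun r => hmono (Sum.inl r)
    have hm2 : ∀ r, Monotone (d2 r) := fun r => hmono (Sum.inr r)
    obtain ⟨hNE1, hNE2, h12, h21⟩ := (NEst_par t1.paths t2.paths d m1 m2 hne1 hne2).mp hNE
    -- helper to build the result once we fix a side
    by_cases hm20 : m2 = 0
    · subst hm20
      have hm10 : m1 ≠ 0 := by
        intro h; exact hm0 (by simp [h]; rfl)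
      obtain ⟨P, hP, hNE1', hbd1⟩ := ih1 d1 hm1 m1 hm10 hNE1
      refine ⟨parF1 P, Multiset.mem_add.mpr (Or.inl (Multiset.mem_map_of_mem _ hP)), ?_, ?_⟩
      · erw [erase_par_F1 _ _ hP]
        refine (NEst_par t1.paths t2.paths d (m1.erase P) 0 hne1 hne2).mpr
          ⟨hNE1', hNE2, fun S hS Q hQ => ?_, fun S hS Q hQ => ?_⟩
        · exact (pcost_mono hm1 (fun r => load_erase_le r) S).trans
            (h12 S (Multiset.mem_of_mem_erase hS) Q hQ)
        · exact absurd hS (Multiset.notMem_zero S)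
      · intro Q hQ
        rcases Multiset.mem_add.mp hQ with h | h
        · obtain ⟨Q0, hQ0, rfl⟩ := Multiset.mem_map.mp h
          erw [pcost_par_F1, pcost_par_F1]
          exact hbd1 Q0 hQ0
        · exact absurd h (by simp; exact Multiset.notMem_zero _)
    · by_cases hm10 : m1 = 0
      · subst hm10
        obtain ⟨P, hP, hNE2', hbd2⟩ := ih2 d2 hm2 m2 hm20 hNE2
        refine ⟨parF2 P, Multiset.mem_add.mpr (Or.inr (Multiset.mem_map_of_mem _ hP)), ?_, ?_⟩
        · erw [erase_par_F2 _ _ hP]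
          refine (NEst_par t1.paths t2.paths d 0 (m2.erase P) hne1 hne2).mpr
            ⟨hNE1, hNE2', fun S hS Q hQ => ?_, fun S hS Q hQ => ?_⟩
          · exact absurd hS (Multiset.notMem_zero S)
          · exact (pcost_mono hm2 (fun r => load_erase_le r) S).trans
              (h21 S (Multiset.mem_of_mem_erase hS) Q hQ)
        · intro Q hQ
          rcases Multiset.mem_add.mp hQ with h | h
          · exact absurd h (by simp; exact Multiset.notMem_zero _)
          · obtain ⟨Q0, hQ0, rfl⟩ := Multiset.mem_map.mp h
            erw [pcost_par_F2, pcost_par_F2]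
            exact hbd2 Q0 hQ0
      · obtain ⟨P1, hP1, hNE1', hbd1⟩ := ih1 d1 hm1 m1 hm10 hNE1
        obtain ⟨P2, hP2, hNE2', hbd2⟩ := ih2 d2 hm2 m2 hm20 hNE2
        rcases le_total (pcost d2 m2 P2) (pcost d1 m1 P1) with hle | hle
        · refine ⟨parF1 P1, Multiset.mem_add.mpr (Or.inl (Multiset.mem_map_of_mem _ hP1)),
            ?_, ?_⟩
          · erw [erase_par_F1 _ _ hP1]
            refine (NEst_par t1.paths t2.paths d (m1.erase P1) m2 hne1 hne2).mpr
              ⟨hNE1', hNE2, fun S hS Q hQ => ?_, fun S hS Q hQ => ?_⟩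
            · exact (pcost_mono hm1 (fun r => load_erase_le r) S).trans
                (h12 S (Multiset.mem_of_mem_erase hS) Q hQ)
            · exact ((hbd2 S hS).trans (hle.trans (hNE1.2 P1 hP1 Q hQ)))
          · intro Q hQ
            rcases Multiset.mem_add.mp hQ with h | h
            · obtain ⟨Q0, hQ0, rfl⟩ := Multiset.mem_map.mp h
              erw [pcost_par_F1, pcost_par_F1]
              exact hbd1 Q0 hQ0
            · obtain ⟨Q0, hQ0, rfl⟩ := Multiset.mem_map.mp h
              erw [pcost_par_F2, pcost_par_F1]
              exact (hbd2 Q0 hQ0).trans hle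
        · refine ⟨parF2 P2, Multiset.mem_add.mpr (Or.inr (Multiset.mem_map_of_mem _ hP2)),
            ?_, ?_⟩
          · erw [erase_par_F2 _ _ hP2]
            refine (NEst_par t1.paths t2.paths d m1 (m2.erase P2) hne1 hne2).mpr
              ⟨hNE1, hNE2', fun S hS Q hQ => ?_, fun S hS Q hQ => ?_⟩
            · exact ((hbd1 S hS).trans (hle.trans (hNE2.2 P2 hP2 Q hQ)))
            · exact (pcost_mono hm2 (fun r => load_erase_le r) S).trans
                (h21 S (Multiset.mem_of_mem_erase hS) Q hQ)
          · intro Q hQ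
            rcases Multiset.mem_add.mp hQ with h | h
            · obtain ⟨Q0, hQ0, rfl⟩ := Multiset.mem_map.mp h
              erw [pcost_par_F1, pcost_par_F2]
              exact (hbd1 Q0 hQ0).trans hle
            · obtain ⟨Q0, hQ0, rfl⟩ := Multiset.mem_map.mp h
              erw [pcost_par_F2, pcost_par_F2]
              exact hbd2 Q0 hQ0
  | extHead t ih =>
    intro d hmono m' hm0 hNE
    have he : Function.Injective (Sum.inr : t.Arc → Unit ⊕ t.Arc) := Sum.inr_injective
    have hc : ∀ r : t.Arc, (Sum.inr r : Unit ⊕ t.Arc) ≠ Sum.inl () := by simp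
    have hps : (EPTree.extHead t).paths = t.paths.image (extF Sum.inr (Sum.inl ())) := rfl
    obtain ⟨m, rfl⟩ := split_extF he hc t.paths m' (hps ▸ hNE.1)
    set dt : t.Arc → ℕ → ℝ := fun r y => d (Sum.inr r) y with hdt
    have hmt : ∀ r, Monotone (dt r) := fun r => hmono (Sum.inr r)
    have hNEt : NEst t.paths dt m := (NEst_extF he hc t.paths d m).mp (hps ▸ hNE)
    have hm0' : m ≠ 0 := by rintro rfl; exact hm0 rfl
    obtain ⟨P, hP, hNEt', hbd⟩ := ih dt hmt m hm0' hNEt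
    refine ⟨extF Sum.inr (Sum.inl ()) P, Multiset.mem_map_of_mem _ hP, ?_, ?_⟩
    · erw [← Multiset.map_erase _ (extF_inj he hc), hps]
      exact (NEst_extF he hc t.paths d (m.erase P)).mpr hNEt'
    · intro Q' hQ'
      obtain ⟨Q, hQ, rfl⟩ := Multiset.mem_map.mp hQ'
      erw [pcost_extF he hc, pcost_extF he hc]
      exact add_le_add_right (hbd Q hQ) _
  | extTail t ih =>
    intro d hmono m' hm0 hNE
    have he : Function.Injective (Sum.inl : t.Arc → t.Arc ⊕ Unit) := Sum.inl_injective
    have hc : ∀ r : t.Arc, (Sum.inl r : t.Arc ⊕ Unit) ≠ Sum.inr () := by simp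
    have hps : (EPTree.extTail t).paths = t.paths.image (extF Sum.inl (Sum.inr ())) := rfl
    obtain ⟨m, rfl⟩ := split_extF he hc t.paths m' (hps ▸ hNE.1)
    set dt : t.Arc → ℕ → ℝ := fun r y => d (Sum.inl r) y with hdt
    have hmt : ∀ r, Monotone (dt r) := fun r => hmono (Sum.inl r)
    have hNEt : NEst t.paths dt m := (NEst_extF he hc t.paths d m).mp (hps ▸ hNE)
    have hm0' : m ≠ 0 := by rintro rfl; exact hm0 rfl
    obtain ⟨P, hP, hNEt', hbd⟩ := ih dt hmt m hm0' hNEt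
    refine ⟨extF Sum.inl (Sum.inr ()) P, Multiset.mem_map_of_mem _ hP, ?_, ?_⟩
    · erw [← Multiset.map_erase _ (extF_inj he hc), hps]
      exact (NEst_extF he hc t.paths d (m.erase P)).mpr hNEt'
    · intro Q' hQ'
      obtain ⟨Q, hQ, rfl⟩ := Multiset.mem_map.mp hQ'
      erw [pcost_extF he hc, pcost_extF he hc]
      exact add_le_add_right (hbd Q hQ) _


section Bridge

open EPNash

variable {R : Type} [DecidableEq R] [Fintype R]

/-- greedy sequence condition -/
def GrFrom (PS : Finset (Finset R)) (d : R → ℕ → ℝ) :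
    Multiset (Finset R) → List (Finset R) → Prop
  | _, [] => True
  | m, P :: L => EPNash.Greedy PS d m P ∧ GrFrom PS d (P ::ₘ m) L

lemma spo_one_char {k : ℕ} (hk : k = 1) (G : CGame R k) (B : Fin k → Finset R) :
    CGame.IsSPO G B ↔ (B ⟨0, by omega⟩ ∈ G.actions ⟨0, by omega⟩ ∧
      ∀ a ∈ G.actions ⟨0, by omega⟩,
        (∑ r ∈ B ⟨0, by omega⟩, G.delay r 1) ≤ ∑ r ∈ a, G.delay r 1) := by
  subst hk
  have hcost : ∀ (a : Finset R) (g : Fin 0 → Finset R),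
      G.cost (Fin.cons a g) 0 = ∑ r ∈ a, G.delay r 1 := by
    intro a g
    unfold CGame.cost
    rw [show (Fin.cons a g : Fin 1 → Finset R) 0 = a from rfl]
    refine Finset.sum_congr rfl fun r hr => ?_
    congr 1
    unfold CGame.congestion
    rw [Finset.filter_true_of_mem, Finset.card_univ, Fintype.card_fin]
    intro i _
    rw [Fin.fin_one_eq_zero i]
    exact hr
  constructor
  · rintro ⟨h0, f, _, hf, hmin⟩
    refine ⟨h0, fun a ha => ?_⟩
    have h := hmin a ha
    rwa [hcost, hcost] at h
  · rintro ⟨h0, hmin⟩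
    refine ⟨h0, fun _ => Fin.tail B, fun a _ => trivial, rfl, fun a ha => ?_⟩
    rw [hcost, hcost]
    exact hmin a ha

end Bridge

lemma KLA_iff (t : EPTree) (d : t.Arc → ℕ → ℝ) :
    ∀ (n : ℕ) (m : Multiset (Finset t.Arc)) (A : Fin n → Finset t.Arc),
      CGame.IsKLA 1 (SNCGep t (fun r y => d r (y + EPNash.load m r)) n) A
        ↔ GrFrom t.paths d m (List.ofFn A) := by
  intro n
  induction n with
  | zero =>
    intro m A
    constructor
    · intro _; rw [List.ofFn_zero]; trivial
    · intro _; trivial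
  | succ n ih =>
    intro m A
    rw [List.ofFn_succ]
    set D : t.Arc → ℕ → ℝ := fun r y => d r (y + EPNash.load m r) with hD
    have hsum : ∀ Q : Finset t.Arc,
        (∑ r ∈ Q, ((SNCGep t D (n+1)).truncate 1).delay r 1) = EPNash.ecost d m Q := by
      intro Q
      refine Finset.sum_congr rfl fun r _ => ?_
      show d r (1 + EPNash.load m r) = d r (EPNash.load m r + 1)
      rw [Nat.add_comm]
    have hsub : (SNCGep t D (n+1)).subgame (A 0)
        = SNCGep t (fun r y => d r (y + EPNash.load (A 0 ::ₘ m) r)) n := by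
      show CGame.mk _ _ = CGame.mk _ _
      congr 1
      funext r y
      show d r ((y + if r ∈ A 0 then 1 else 0) + EPNash.load m r) = _
      rw [EPNash.load_cons]
      congr 1
      omega
    have hmin1 : min 1 (n + 1) = 1 := by omega
    constructor
    · rintro ⟨⟨hk, B, hSPO, hB0⟩, htail⟩
      have hspo := (spo_one_char hmin1 _ B).mp hSPO
      have hB0' : B ⟨0, by omega⟩ = A 0 := hB0
      rw [hB0'] at hspo
      refine ⟨⟨hspo.1, fun Q hQ => ?_⟩, ?_⟩
      · have h := hspo.2 Q hQ
        rwa [hsum, hsum] at h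
      · have h := htail
        rw [hsub] at h
        rw [show Fin.tail A = fun i : Fin n => A i.succ from rfl] at h
        exact (ih (A 0 ::ₘ m) _).mp h
    · rintro ⟨⟨hmem, hgr⟩, htail⟩
      refine ⟨⟨by omega, fun _ => A 0, ?_, rfl⟩, ?_⟩
      · refine (spo_one_char hmin1 _ _).mpr ⟨hmem, fun a ha => ?_⟩
        rw [hsum, hsum]
        exact hgr a ha
      · show CGame.IsKLA 1 ((SNCGep t D (n+1)).subgame (A 0)) (Fin.tail A)
        rw [hsub]
        exact (ih (A 0 ::ₘ m) _).mpr htail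


section NashBridge

open EPNash

variable {R : Type} [DecidableEq R] [Fintype R] {n : ℕ}

/-- the multiset of actions of a profile -/
def MA (A : Fin n → Finset R) : Multiset (Finset R) := Multiset.map A Finset.univ.val

lemma load_MA (A : Fin n → Finset R) (G : CGame R n) (r : R) :
    EPNash.load (MA A) r = G.congestion A r := by
  rw [MA, EPNash.load_map, CGame.congestion, Multiset.countP_eq_card_filter]
  rfl

lemma MA_eq_cons (A : Fin n → Finset R) (i : Fin n) :
    MA A = A i ::ₘ Multiset.map A (Finset.univ.val.erase i) := by
  rw [MA]
  conv_lhs => rw [← Multiset.cons_erase (Finset.mem_univ_val i)]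
  rw [Multiset.map_cons]

lemma MA_erase (A : Fin n → Finset R) (i : Fin n) :
    (MA A).erase (A i) = Multiset.map A (Finset.univ.val.erase i) := by
  rw [MA_eq_cons A i, Multiset.erase_cons_head]

lemma map_update_erase (A : Fin n → Finset R) (i : Fin n) (B : Finset R) :
    Multiset.map (Function.update A i B) (Finset.univ.val.erase i)
      = Multiset.map A (Finset.univ.val.erase i) := by
  refine Multiset.map_congr rfl fun j hj => ?_
  have hj' : j ≠ i := by
    have := (Multiset.Nodup.mem_erase_iff Finset.univ.nodup).mp hj
    exact this.1
  exact Function.update_of_ne hj' B A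

lemma congestion_update (G : CGame R n) (A : Fin n → Finset R) (i : Fin n) (B : Finset R)
    (r : R) :
    G.congestion (Function.update A i B) r
      = EPNash.load (Multiset.map A (Finset.univ.val.erase i)) r
        + (if r ∈ B then 1 else 0) := by
  rw [← load_MA (Function.update A i B) G r, MA_eq_cons (Function.update A i B) i,
    Function.update_self, map_update_erase A i B, EPNash.load_cons]

lemma cost_eq_pcost (G : CGame R n) (hG : G.delay = d) (A : Fin n → Finset R) (i : Fin n) :
    G.cost A i = EPNash.pcost d (MA A) (A i) := by
  rw [CGame.cost, EPNash.pcost]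
  exact Finset.sum_congr rfl fun r _ => by rw [load_MA A G r, hG]

lemma cost_update_eq_ecost (G : CGame R n) {d : R → ℕ → ℝ} (hG : G.delay = d)
    (A : Fin n → Finset R) (i : Fin n) (B : Finset R) :
    G.cost (Function.update A i B) i = EPNash.ecost d ((MA A).erase (A i)) B := by
  rw [CGame.cost, EPNash.ecost, Function.update_self, MA_erase]
  refine Finset.sum_congr rfl fun r hr => ?_
  rw [congestion_update G A i B r, if_pos hr, hG]

variable {d : R → ℕ → ℝ}

lemma isNash_iff_NEst (G : CGame R n) (PS : Finset (Finset R))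
    (hG : G.delay = d) (hact : ∀ i, G.actions i = PS) (A : Fin n → Finset R) :
    G.IsNash A ↔ EPNash.NEst PS d (MA A) := by
  constructor
  · rintro ⟨hout, hnash⟩
    constructor
    · intro P hP
      obtain ⟨i, _, rfl⟩ := Multiset.mem_map.mp hP
      exact hact i ▸ hout i
    · intro P hP Q hQ
      obtain ⟨i, _, rfl⟩ := Multiset.mem_map.mp hP
      have h := hnash i Q ((hact i).symm ▸ hQ)
      rwa [cost_eq_pcost G hG, cost_update_eq_ecost G hG] at h
  · rintro ⟨hmem, hineq⟩
    have hout : G.IsOutcome A := fun i => (hact i) ▸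
      hmem (A i) (Multiset.mem_map_of_mem A (Finset.mem_univ_val i))
    refine ⟨hout, fun i Q hQ => ?_⟩
    rw [cost_eq_pcost G hG, cost_update_eq_ecost G hG]
    exact hineq (A i) (Multiset.mem_map_of_mem A (Finset.mem_univ_val i)) Q
      ((hact i) ▸ hQ)

lemma MA_comp_perm (A : Fin n → Finset R) (σ : Equiv.Perm (Fin n)) :
    MA (A ∘ σ) = MA A := by
  rw [MA, MA, ← Multiset.map_map]
  congr 1
  have h : Finset.univ.val.map σ = (Finset.univ.map σ.toEmbedding).val := by
    rw [Finset.map_val]; rfl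
  rw [h, Finset.map_univ_equiv]

lemma coe_ofFn_eq_MA (B : Fin n → Finset R) :
    ((List.ofFn B : List (Finset R)) : Multiset (Finset R)) = MA B := by
  rw [List.ofFn_eq_map, MA]
  have : (Finset.univ.val : Multiset (Fin n)) = ((List.finRange n : List (Fin n)) : Multiset (Fin n)) := by
    rfl
  rw [this]
  rfl

end NashBridge


section Final

open EPNash

lemma GrFrom_append {R : Type} [DecidableEq R] (PS : Finset (Finset R)) (d : R → ℕ → ℝ) :
    ∀ (L : List (Finset R)) (m : Multiset (Finset R)) (P : Finset R),
      GrFrom PS d m (L ++ [P]) ↔ GrFrom PS d m L ∧ Greedy PS d (m + ↑L) P := by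
  intro L
  induction L with
  | nil =>
    intro m P
    show (Greedy PS d m P ∧ True) ↔ (True ∧ Greedy PS d (m + ↑([] : List (Finset R))) P)
    rw [show m + ↑([] : List (Finset R)) = m by simp]
    tauto
  | cons Q L ih =>
    intro m P
    show (Greedy PS d m Q ∧ GrFrom PS d (Q ::ₘ m) (L ++ [P]))
      ↔ (Greedy PS d m Q ∧ GrFrom PS d (Q ::ₘ m) L) ∧ _
    rw [ih (Q ::ₘ m) P]
    have hms : (Q ::ₘ m) + ↑L = m + ↑(Q :: L) := by
      rw [← Multiset.cons_coe, Multiset.cons_add, Multiset.add_cons]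
    rw [hms]
    tauto

lemma GrFrom_to_NEst (t : EPTree) (d : t.Arc → ℕ → ℝ) (hmono : ∀ r, Monotone (d r)) :
    ∀ (L : List (Finset t.Arc)) (m : Multiset (Finset t.Arc)),
      NEst t.paths d m → GrFrom t.paths d m L → NEst t.paths d (m + ↑L) := by
  intro L
  induction L with
  | nil =>
    intro m hNE _
    rwa [show m + ↑([] : List (Finset t.Arc)) = m by simp]
  | cons P L ih =>
    rintro m hNE ⟨hgr, htail⟩
    have h := ih (P ::ₘ m) (EP_L1 t d hmono m hNE P hgr).1 htail
    rwa [show (P ::ₘ m) + ↑L = m + ↑(P :: L) by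
      rw [← Multiset.cons_coe, Multiset.cons_add, Multiset.add_cons]] at h

lemma erase_univ_val_succAbove {n : ℕ} (i : Fin (n + 1)) :
    (Finset.univ.val.erase i : Multiset (Fin (n + 1)))
      = Finset.univ.val.map i.succAbove := by
  have h := Fin.univ_succAbove n i
  rw [show (Finset.univ.val : Multiset (Fin (n+1)))
      = i ::ₘ Finset.univ.val.map i.succAbove by
    conv_lhs => rw [h]
    rw [Finset.cons_val, Finset.map_val]
    rfl]
  rw [Multiset.erase_cons_head]

lemma NEst_to_exists_greedy (t : EPTree) (d : t.Arc → ℕ → ℝ) (hmono : ∀ r, Monotone (d r)) :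
    ∀ (n : ℕ) (A : Fin n → Finset t.Arc), NEst t.paths d (MA A) →
      ∃ σ : Equiv.Perm (Fin n), GrFrom t.paths d 0 (List.ofFn (A ∘ σ)) := by
  intro n
  induction n with
  | zero =>
    intro A _
    exact ⟨1, by rw [List.ofFn_zero]; trivial⟩
  | succ n ih =>
    intro A hNE
    have hm0 : MA A ≠ 0 := by
      intro h
      have : (0 : Fin (n+1)) ∈ Finset.univ.val := Finset.mem_univ_val 0
      have : A 0 ∈ MA A := Multiset.mem_map_of_mem A this
      rw [h] at this
      exact Multiset.notMem_zero _ this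
    obtain ⟨P, hPm, hNE', _⟩ := EP_L2 t d hmono (MA A) hm0 hNE
    have hgrP : Greedy t.paths d ((MA A).erase P) P := hNE.greedy_erase hPm
    obtain ⟨i, _, rfl⟩ := Multiset.mem_map.mp hPm
    set A' : Fin n → Finset t.Arc := A ∘ i.succAbove with hA'
    have hMA' : (MA A).erase (A i) = MA A' := by
      rw [MA_erase, erase_univ_val_succAbove, MA, Multiset.map_map]
    rw [hMA'] at hNE' hgrP
    obtain ⟨σ', hgr'⟩ := ih A' hNE'
    -- build the permutation of Fin (n+1): positions 0..n-1 follow σ' via succAbove, last is i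
    set ρ : Fin (n+1) → Fin (n+1) := fun k =>
      if h : (k : ℕ) < n then i.succAbove (σ' ⟨k, h⟩) else i with hρ
    have hinj : Function.Injective ρ := by
      intro a b hab
      by_cases ha : (a : ℕ) < n
      · by_cases hb : (b : ℕ) < n
        · rw [hρ] at hab
          simp only at hab
          rw [dif_pos ha, dif_pos hb] at hab
          have h1 := Fin.succAbove_right_injective (p := i) hab
          have h2 := σ'.injective h1
          have h3 := congrArg (Fin.val : Fin n → ℕ) h2
          exact Fin.ext h3
        · rw [hρ] at hab
          simp only at hab
          rw [dif_pos ha, dif_neg hb] at hab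
          exact absurd hab (Fin.succAbove_ne i _)
      · by_cases hb : (b : ℕ) < n
        · rw [hρ] at hab
          simp only at hab
          rw [dif_neg ha, dif_pos hb] at hab
          exact absurd hab.symm (Fin.succAbove_ne i _)
        · have ha' : (a : ℕ) = n := by omega
          have hb' : (b : ℕ) = n := by omega
          exact Fin.ext (ha'.trans hb'.symm)
    let σ : Equiv.Perm (Fin (n+1)) :=
      Equiv.ofBijective _ (Finite.injective_iff_bijective.mp hinj)
    refine ⟨σ, ?_⟩
    have hofn : List.ofFn (A ∘ σ) = List.ofFn (A' ∘ σ') ++ [A i] := by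
      rw [List.ofFn_succ', List.concat_eq_append]
      congr 1
      · refine congrArg List.ofFn (funext fun k => ?_)
        show A (ρ (Fin.castSucc k)) = A' (σ' k)
        show A (if h : ((Fin.castSucc k : Fin (n+1)) : ℕ) < n
            then i.succAbove (σ' ⟨((Fin.castSucc k : Fin (n+1)) : ℕ), h⟩) else i) = A' (σ' k)
        rw [dif_pos (show ((Fin.castSucc k : Fin (n+1)) : ℕ) < n from k.isLt)]
        rfl
      · show [A (ρ (Fin.last n))] = [A i]
        have hlast : ρ (Fin.last n) = i := by
          show (if h : ((Fin.last n : Fin (n+1)) : ℕ) < n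
              then i.succAbove (σ' ⟨((Fin.last n : Fin (n+1)) : ℕ), h⟩) else i) = i
          rw [dif_neg (by simp)]
        rw [hlast]
    rw [hofn, GrFrom_append]
    refine ⟨hgr', ?_⟩
    rwa [show (0 : Multiset (Finset t.Arc)) + ↑(List.ofFn (A' ∘ σ')) = MA A' by
      rw [zero_add, coe_ofFn_eq_MA, MA_comp_perm]]

end Final


/-- For every symmetric network congestion game on an
extension-parallel graph, an outcome is a 1-lookahead outcome iff it is a Nash
equilibrium. -/
theorem ep_one_lookahead_iff_nash (t : EPTree) (d : t.Arc → ℕ → ℝ)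
    (hmono : ∀ r, Monotone (d r)) (hnonneg : ∀ r m, 0 ≤ d r m)
    (n : ℕ) (A : Fin n → Finset t.Arc) :
    CGame.IsKLO 1 (SNCGep t d n) A ↔ CGame.IsNash (SNCGep t d n) A := by
  have hd0 : (fun r y => d r (y + EPNash.load 0 r)) = d := by
    funext r y
    show d r (y + 0) = d r y
    rw [Nat.add_zero]
  have hG0 : SNCGep t (fun r y => d r (y + EPNash.load 0 r)) n = SNCGep t d n := by
    rw [hd0]
  constructor
  · rintro ⟨σ, hKLA⟩
    have hKLA' : CGame.IsKLA 1
        (SNCGep t (fun r y => d r (y + EPNash.load 0 r)) n) (A ∘ σ) := by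
      rw [hG0]
      exact hKLA
    have hgr := (KLA_iff t d n 0 (A ∘ σ)).mp hKLA'
    have hNE := GrFrom_to_NEst t d hmono (List.ofFn (A ∘ σ)) 0
      (EPNash.NEst_zero _ _) hgr
    rw [zero_add, coe_ofFn_eq_MA, MA_comp_perm] at hNE
    exact (isNash_iff_NEst (SNCGep t d n) t.paths rfl (fun _ => rfl) A).mpr hNE
  · intro hN
    have hNE := (isNash_iff_NEst (SNCGep t d n) t.paths rfl (fun _ => rfl) A).mp hN
    obtain ⟨σ, hgr⟩ := NEst_to_exists_greedy t d hmono n A hNE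
    refine ⟨σ, ?_⟩
    show CGame.IsKLA 1 ((SNCGep t d n).reorder σ) (A ∘ σ)
    have h := (KLA_iff t d n 0 (A ∘ σ)).mpr hgr
    rw [hG0] at h
    exact h
end

section
/- Let G be a generic symmetric network congestion game on an extension-parallel graph with n players and let B be a subgame-perfect outcome of G with respect to the order 1,…,n. Then c_1(B) ≤ c_2(B) ≤ … ≤ c_n(B). Moreover, for every k ∈ {1,…,n} and every k-lookahead outcome A of G with respect to the order 1,…,n, c_1(B) ≤ c_1(A). -/
/-!
Record an outcome by its configuration, the multiset of chosen paths. On an extension-parallel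
network Rosenthal's potential has two exchange properties, proved by induction on the network:
a path can be transferred from a larger configuration to a smaller one, and a path that one
configuration uses more often than another can be moved over (possibly against a path going
back), without increasing the sum of the two potentials. With genericity these make the
potential minimizer among configurations of `m` paths unique and nested in `m`.

By induction on the number of players, a subgame-perfect outcome realizes this minimizer, and
its first player picks the cheapest path in it, so costs do not decrease along the order. The
first move of a `k`-lookahead outcome lies in the minimizer for `min k n` players, hence in the
one for `n` players, so a `k`-lookahead outcome realizes the same configuration, and its first
player pays what some player of the subgame-perfect outcome pays.
-/

namespace PathConfig

open Finset

section Potential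

variable {R : Type*} [DecidableEq R]

def load (z : Multiset (Finset R)) (r : R) : ℕ :=
  z.countP (r ∈ ·)

@[simp] lemma load_zero (r : R) : load 0 r = 0 :=
  Multiset.countP_zero _

@[simp] lemma load_cons (p : Finset R) (z : Multiset (Finset R)) (r : R) :
    load (p ::ₘ z) r = load z r + if r ∈ p then 1 else 0 :=
  Multiset.countP_cons _ _ _

def cumDelay (f : ℕ → ℝ) (k : ℕ) : ℝ :=
  ∑ i ∈ range k, f (i + 1)

lemma cumDelay_pred_add_succ_le {f : ℕ → ℝ} (hf : Monotone f) {m k : ℕ} (h : m < k) :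
    cumDelay f (k - 1) + cumDelay f (m + 1) ≤ cumDelay f k + cumDelay f m := by
  obtain ⟨k, rfl⟩ : ∃ k', k = k' + 1 := ⟨k - 1, by omega⟩
  simp only [cumDelay, Nat.add_sub_cancel, sum_range_succ]
  linarith [hf (show m + 1 ≤ k + 1 by omega)]

def pathCost (D : R → ℕ → ℝ) (z : Multiset (Finset R)) (p : Finset R) : ℝ :=
  ∑ r ∈ p, D r (load z r)

/-- The delays of the subgame induced by a first move `a`. -/
def shiftDelay (D : R → ℕ → ℝ) (a : Finset R) : R → ℕ → ℝ :=
  fun r y => D r (y + if r ∈ a then 1 else 0)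

lemma shiftDelay_monotone {D : R → ℕ → ℝ} (hD : ∀ r, Monotone (D r)) (a : Finset R) (r : R) :
    Monotone (shiftDelay D a r) :=
  fun _ _ h => hD r (by omega)

lemma pathCost_shiftDelay (D : R → ℕ → ℝ) (a : Finset R) (z : Multiset (Finset R))
    (p : Finset R) : pathCost (shiftDelay D a) z p = pathCost D (a ::ₘ z) p := by
  simp only [pathCost, shiftDelay, load_cons]

lemma pathCost_cons_self (D : R → ℕ → ℝ) (p : Finset R) (z : Multiset (Finset R)) :
    pathCost D (p ::ₘ z) p = ∑ r ∈ p, D r (load z r + 1) :=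
  sum_congr rfl fun r hr => by rw [load_cons, if_pos hr]

variable [Fintype R]

def potential (D : R → ℕ → ℝ) (z : Multiset (Finset R)) : ℝ :=
  ∑ r, cumDelay (D r) (load z r)

@[simp] lemma potential_zero (D : R → ℕ → ℝ) : potential D 0 = 0 := by
  simp [potential, cumDelay]

lemma potential_cons (D : R → ℕ → ℝ) (p : Finset R) (z : Multiset (Finset R)) :
    potential D (p ::ₘ z) = potential D z + pathCost D (p ::ₘ z) p := by
  have hr : ∀ r, cumDelay (D r) (load (p ::ₘ z) r)
      = cumDelay (D r) (load z r) + if r ∈ p then D r (load z r + 1) else 0 := fun r => by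
    by_cases h : r ∈ p <;> simp [h, cumDelay, sum_range_succ]
  rw [potential, sum_congr rfl fun r _ => hr r, sum_add_distrib, sum_ite_mem, univ_inter,
    pathCost_cons_self, potential]

lemma pathCost_cons_self_eq_sub (D : R → ℕ → ℝ) (p : Finset R) (z : Multiset (Finset R)) :
    pathCost D (p ::ₘ z) p = potential D (p ::ₘ z) - potential D z := by
  rw [potential_cons]; ring

lemma pathCost_eq_potential_sub (D : R → ℕ → ℝ) {p : Finset R} {z : Multiset (Finset R)}
    (hp : p ∈ z) : pathCost D z p = potential D z - potential D (z.erase p) := by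
  conv_rhs => rw [← Multiset.cons_erase hp, potential_cons, Multiset.cons_erase hp]
  ring

lemma potential_shiftDelay (D : R → ℕ → ℝ) (a : Finset R) (z : Multiset (Finset R)) :
    potential (shiftDelay D a) z + potential D {a} = potential D (a ::ₘ z) := by
  induction z using Multiset.induction with
  | empty => simp
  | cons p z ih =>
    rw [potential_cons, pathCost_shiftDelay, Multiset.cons_swap, potential_cons D p, ← ih]
    ring

lemma potential_transfer_le_iff (D : R → ℕ → ℝ) {z z' : Multiset (Finset R)} {p : Finset R}
    (hp : p ∈ z) :
    potential D (z.erase p) + potential D (p ::ₘ z') ≤ potential D z + potential D z'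
      ↔ pathCost D (p ::ₘ z') p ≤ pathCost D z p := by
  rw [pathCost_eq_potential_sub D hp, potential_cons]
  constructor <;> intro h <;> linarith

end Potential

section Exchange

variable {R : Type*} [DecidableEq R] [Fintype R]

def TransferLE (D : R → ℕ → ℝ) (z z' : Multiset (Finset R)) (p : Finset R) : Prop :=
  potential D (z.erase p) + potential D (p ::ₘ z') ≤ potential D z + potential D z'

def SwapLE (D : R → ℕ → ℝ) (z z' : Multiset (Finset R)) (p q : Finset R) : Prop :=
  potential D (q ::ₘ z.erase p) + potential D (p ::ₘ z'.erase q) ≤ potential D z + potential D z'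

def ExchangeAt (D : R → ℕ → ℝ) (z z' : Multiset (Finset R)) (p : Finset R) : Prop :=
  (Multiset.card z' < Multiset.card z ∧ TransferLE D z z' p) ∨
    ∃ q, z.count q < z'.count q ∧ SwapLE D z z' p q

def HasTransfer (S : Finset (Finset R)) : Prop :=
  ∀ D : R → ℕ → ℝ, (∀ r, Monotone (D r)) → ∀ z z' : Multiset (Finset R),
    (∀ P ∈ z, P ∈ S) → (∀ P ∈ z', P ∈ S) → Multiset.card z' < Multiset.card z →
    ∃ p, z'.count p < z.count p ∧ TransferLE D z z' p

def HasExchange (S : Finset (Finset R)) : Prop :=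
  ∀ D : R → ℕ → ℝ, (∀ r, Monotone (D r)) → ∀ z z' : Multiset (Finset R),
    (∀ P ∈ z, P ∈ S) → (∀ P ∈ z', P ∈ S) → ∀ p, z'.count p < z.count p → ExchangeAt D z z' p

lemma count_eq_card_of_forall_mem_singleton {α : Type*} [DecidableEq α] {P : α} {y : Multiset α}
    (hy : ∀ Q ∈ y, Q ∈ ({P} : Finset α)) : y.count P = Multiset.card y :=
  Multiset.count_eq_card.2 fun Q hQ => (mem_singleton.1 (hy Q hQ)).symm

lemma hasTransfer_singleton (P : Finset R) : HasTransfer {P} := by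
  intro D hD z z' hz hz' hcard
  have hload (y : Multiset (Finset R)) (hy : ∀ Q ∈ y, Q ∈ ({P} : Finset (Finset R))) (r : R)
      (hr : r ∈ P) : load y r = Multiset.card y :=
    Multiset.countP_eq_card.2 fun Q hQ => mem_singleton.1 (hy Q hQ) ▸ hr
  have hzP := count_eq_card_of_forall_mem_singleton hz
  have hz'P := count_eq_card_of_forall_mem_singleton hz'
  refine ⟨P, by omega, ?_⟩
  rw [TransferLE, potential_transfer_le_iff D (Multiset.count_pos.1 (by omega)), pathCost_cons_self]
  exact sum_le_sum fun r hr => hD r (by rw [hload z hz r hr, hload z' hz' r hr]; omega)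

lemma hasExchange_singleton (P : Finset R) : HasExchange {P} := by
  intro D hD z z' hz hz' p hp
  obtain rfl : p = P := mem_singleton.1 (hz p (Multiset.count_pos.1 (by omega)))
  have hcard : Multiset.card z' < Multiset.card z := by
    rwa [count_eq_card_of_forall_mem_singleton hz, count_eq_card_of_forall_mem_singleton hz'] at hp
  obtain ⟨q, hq, hineq⟩ := hasTransfer_singleton p D hD z z' hz hz' hcard
  obtain rfl : q = p := mem_singleton.1 (hz q (Multiset.count_pos.1 (by omega)))
  exact Or.inl ⟨hcard, hineq⟩

lemma exists_eq_map {A B : Type*} [DecidableEq B] (f : A → B) {S : Finset A} {z : Multiset B}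
    (hz : ∀ P ∈ z, P ∈ S.image f) : ∃ w : Multiset A, (∀ P ∈ w, P ∈ S) ∧ w.map f = z := by
  induction z using Multiset.induction with
  | empty => exact ⟨0, by simp, rfl⟩
  | cons Q z ih =>
    obtain ⟨w, hw, rfl⟩ := ih fun P hP => hz P (Multiset.mem_cons_of_mem hP)
    obtain ⟨P, hP, rfl⟩ := mem_image.1 (hz _ (Multiset.mem_cons_self _ _))
    refine ⟨P ::ₘ w, fun P' hP' => ?_, Multiset.map_cons _ _ _⟩
    rcases Multiset.mem_cons.1 hP' with rfl | h
    exacts [hP, hw P' h]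

lemma potential_eq_of_bijective {A₁ A₂ B : Type*} [DecidableEq B] [Fintype B] [Fintype A₁]
    [Fintype A₂] {g₁ : A₁ → B} {g₂ : A₂ → B} (hg : Function.Bijective (Sum.elim g₁ g₂))
    (D : B → ℕ → ℝ) (z : Multiset (Finset B)) :
    potential D z = ∑ a, cumDelay (D (g₁ a)) (load z (g₁ a))
      + ∑ a, cumDelay (D (g₂ a)) (load z (g₂ a)) := by
  rw [potential, ← (Equiv.ofBijective _ hg).sum_comp, Fintype.sum_sum_type]
  rfl

end Exchange

section Extension

variable {A B : Type*} [DecidableEq B] {e : B} {g : A → B}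

/-- The path `P` of a network, preceded or followed by the new arc `e` of a series extension. -/
def extend (e : B) (g : A → B) (P : Finset A) : Finset B :=
  insert e (P.image g)

lemma mem_extend_apply (hg : Function.Bijective (Sum.elim (fun _ : Unit => e) g))
    (P : Finset A) (a : A) : g a ∈ extend e g P ↔ a ∈ P := by
  have hne : g a ≠ e := fun h => Sum.inr_ne_inl (hg.1 (a₁ := .inr a) (a₂ := .inl ()) h)
  have hinj : Function.Injective g := hg.1.comp Sum.inr_injective
  simp [extend, hne, hinj.eq_iff]

lemma extend_injective (hg : Function.Bijective (Sum.elim (fun _ : Unit => e) g)) :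
    Function.Injective (extend e g) := fun P Q h => by
  ext a; rw [← mem_extend_apply hg, h, mem_extend_apply hg]

variable [DecidableEq A] [Fintype A] [Fintype B]

lemma potential_map_extend (hg : Function.Bijective (Sum.elim (fun _ : Unit => e) g))
    (D : B → ℕ → ℝ) (w : Multiset (Finset A)) :
    potential D (w.map (extend e g)) = cumDelay (D e) (Multiset.card w)
      + potential (fun a => D (g a)) w := by
  have hload : ∀ a, load (w.map (extend e g)) (g a) = load w a := fun a => by
    rw [load, load, Multiset.countP_map, Multiset.countP_eq_card_filter]
    simp only [mem_extend_apply hg]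
  have hloade : load (w.map (extend e g)) e = Multiset.card w := by
    rw [load, Multiset.countP_eq_card.2, Multiset.card_map]
    simp [extend]
  rw [potential_eq_of_bijective hg, Fintype.sum_unique]
  simp only [hload, hloade, potential]

lemma transferLE_map_extend (hg : Function.Bijective (Sum.elim (fun _ : Unit => e) g))
    {D : B → ℕ → ℝ} (hD : Monotone (D e)) {w w' : Multiset (Finset A)} {p : Finset A}
    (hp : p ∈ w) (hcard : Multiset.card w' < Multiset.card w)
    (h : TransferLE (fun a => D (g a)) w w' p) :
    TransferLE D (w.map (extend e g)) (w'.map (extend e g)) (extend e g p) := by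
  rw [TransferLE] at h ⊢
  rw [← Multiset.map_erase _ (extend_injective hg), ← Multiset.map_cons]
  simp only [potential_map_extend hg, Multiset.card_erase_of_mem hp, Nat.pred_eq_sub_one,
    Multiset.card_cons]
  linarith [cumDelay_pred_add_succ_le hD hcard]

lemma swapLE_map_extend (hg : Function.Bijective (Sum.elim (fun _ : Unit => e) g))
    {D : B → ℕ → ℝ} {w w' : Multiset (Finset A)} {p q : Finset A} (hp : p ∈ w) (hq : q ∈ w')
    (h : SwapLE (fun a => D (g a)) w w' p q) :
    SwapLE D (w.map (extend e g)) (w'.map (extend e g)) (extend e g p) (extend e g q) := by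
  have hinj := extend_injective hg
  rw [SwapLE] at h ⊢
  rw [← Multiset.map_erase _ hinj, ← Multiset.map_erase _ hinj, ← Multiset.map_cons,
    ← Multiset.map_cons]
  simp only [potential_map_extend hg, Multiset.card_cons, Multiset.card_erase_add_one hp,
    Multiset.card_erase_add_one hq]
  linarith

lemma hasTransfer_extend (hg : Function.Bijective (Sum.elim (fun _ : Unit => e) g))
    {S : Finset (Finset A)} (hS : HasTransfer S) : HasTransfer (S.image (extend e g)) := by
  intro D hD z z' hz hz' hcard
  obtain ⟨w, hw, rfl⟩ := exists_eq_map _ hz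
  obtain ⟨w', hw', rfl⟩ := exists_eq_map _ hz'
  rw [Multiset.card_map, Multiset.card_map] at hcard
  obtain ⟨p, hp, hineq⟩ := hS _ (fun a => hD (g a)) w w' hw hw' hcard
  refine ⟨extend e g p, ?_, transferLE_map_extend hg (hD e) (Multiset.count_pos.1 (by omega))
    hcard hineq⟩
  simpa only [Multiset.count_map_eq_count' _ _ (extend_injective hg)] using hp

lemma hasExchange_extend (hg : Function.Bijective (Sum.elim (fun _ : Unit => e) g))
    {S : Finset (Finset A)} (hS : HasExchange S) : HasExchange (S.image (extend e g)) := by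
  intro D hD z z' hz hz' p hp
  obtain ⟨w, hw, rfl⟩ := exists_eq_map _ hz
  obtain ⟨w', hw', rfl⟩ := exists_eq_map _ hz'
  have hinj := extend_injective hg
  obtain ⟨p, -, rfl⟩ := Multiset.mem_map.1 (Multiset.count_pos.1 (Nat.zero_lt_of_lt hp))
  rw [Multiset.count_map_eq_count' _ _ hinj, Multiset.count_map_eq_count' _ _ hinj] at hp
  have hpw : p ∈ w := Multiset.count_pos.1 (by omega)
  rcases hS _ (fun a => hD (g a)) w w' hw hw' p hp with ⟨hcard, hineq⟩ | ⟨q, hq, hineq⟩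
  · exact Or.inl ⟨by simpa only [Multiset.card_map] using hcard,
      transferLE_map_extend hg (hD e) hpw hcard hineq⟩
  · refine Or.inr ⟨extend e g q, ?_,
      swapLE_map_extend hg hpw (Multiset.count_pos.1 (by omega)) hineq⟩
    simpa only [Multiset.count_map_eq_count' _ _ hinj] using hq

end Extension

section Parallel

variable {A₁ A₂ B : Type*} {g₁ : A₁ → B} {g₂ : A₂ → B}

lemma bijective_sumElim_swap (hg : Function.Bijective (Sum.elim g₁ g₂)) :
    Function.Bijective (Sum.elim g₂ g₁) :=
  Sum.elim_swap ▸ hg.comp (Equiv.sumComm A₂ A₁).bijective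

variable [DecidableEq B]

/-- The configuration of a parallel composition whose two parts carry `w₁` and `w₂`. -/
def parallel (g₁ : A₁ → B) (g₂ : A₂ → B) (w₁ : Multiset (Finset A₁))
    (w₂ : Multiset (Finset A₂)) : Multiset (Finset B) :=
  w₁.map (image g₁) + w₂.map (image g₂)

lemma parallel_comm (w₁ : Multiset (Finset A₁)) (w₂ : Multiset (Finset A₂)) :
    parallel g₁ g₂ w₁ w₂ = parallel g₂ g₁ w₂ w₁ :=
  add_comm _ _

lemma card_parallel (w₁ : Multiset (Finset A₁)) (w₂ : Multiset (Finset A₂)) :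
    Multiset.card (parallel g₁ g₂ w₁ w₂) = Multiset.card w₁ + Multiset.card w₂ := by
  simp [parallel]

lemma cons_parallel_left (p : Finset A₁) (w₁ : Multiset (Finset A₁))
    (w₂ : Multiset (Finset A₂)) :
    p.image g₁ ::ₘ parallel g₁ g₂ w₁ w₂ = parallel g₁ g₂ (p ::ₘ w₁) w₂ := by
  rw [parallel, parallel, Multiset.map_cons, Multiset.cons_add]

lemma cons_parallel_right (p : Finset A₂) (w₁ : Multiset (Finset A₁))
    (w₂ : Multiset (Finset A₂)) :
    p.image g₂ ::ₘ parallel g₁ g₂ w₁ w₂ = parallel g₁ g₂ w₁ (p ::ₘ w₂) := by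
  rw [parallel_comm, cons_parallel_left, parallel_comm]

lemma exists_eq_parallel {S₁ : Finset (Finset A₁)} {S₂ : Finset (Finset A₂)}
    {z : Multiset (Finset B)} (hz : ∀ P ∈ z, P ∈ S₁.image (image g₁) ∪ S₂.image (image g₂)) :
    ∃ w₁ w₂, (∀ P ∈ w₁, P ∈ S₁) ∧ (∀ P ∈ w₂, P ∈ S₂) ∧ parallel g₁ g₂ w₁ w₂ = z := by
  obtain ⟨w₁, hw₁, h₁⟩ := exists_eq_map (image g₁) (S := S₁)
    (z := z.filter (· ∈ S₁.image (image g₁))) fun P hP => (Multiset.mem_filter.1 hP).2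
  obtain ⟨w₂, hw₂, h₂⟩ := exists_eq_map (image g₂) (S := S₂)
    (z := z.filter (· ∉ S₁.image (image g₁))) fun P hP => by
      obtain ⟨hPz, hP₁⟩ := Multiset.mem_filter.1 hP
      exact (mem_union.1 (hz P hPz)).resolve_left hP₁
  exact ⟨w₁, w₂, hw₁, hw₂, by rw [parallel, h₁, h₂, Multiset.filter_add_not]⟩

lemma load_parallel_left [DecidableEq A₁] (hg : Function.Bijective (Sum.elim g₁ g₂))
    (w₁ : Multiset (Finset A₁)) (w₂ : Multiset (Finset A₂)) (a : A₁) :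
    load (parallel g₁ g₂ w₁ w₂) (g₁ a) = load w₁ a := by
  have hinj : Function.Injective g₁ := hg.1.comp Sum.inl_injective
  have hne : ∀ b, g₂ b ≠ g₁ a := fun b h => Sum.inr_ne_inl (hg.1 (a₁ := .inr b) (a₂ := .inl a) h)
  have h₂ : (w₂.map (image g₂)).countP (g₁ a ∈ ·) = 0 := Multiset.countP_eq_zero.2 fun Q hQ => by
    obtain ⟨Q, -, rfl⟩ := Multiset.mem_map.1 hQ
    simp [hne]
  rw [load, load, parallel, Multiset.countP_add, h₂, add_zero, Multiset.countP_map,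
    Multiset.countP_eq_card_filter]
  simp only [hinj.mem_finset_image]

lemma count_parallel_left [DecidableEq A₁] (hg : Function.Bijective (Sum.elim g₁ g₂))
    (w₁ : Multiset (Finset A₁)) (w₂ : Multiset (Finset A₂)) {p : Finset A₁} (hp : p.Nonempty) :
    (parallel g₁ g₂ w₁ w₂).count (p.image g₁) = w₁.count p := by
  have hinj : Function.Injective g₁ := hg.1.comp Sum.inl_injective
  have hnot : p.image g₁ ∉ w₂.map (image g₂) := by
    rintro hmem
    obtain ⟨Q, -, hQ⟩ := Multiset.mem_map.1 hmem
    obtain ⟨x, hx⟩ := hp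
    obtain ⟨y, -, hy⟩ := mem_image.1 (hQ ▸ mem_image_of_mem g₁ hx)
    exact Sum.inr_ne_inl (hg.1 (a₁ := .inr y) (a₂ := .inl x) hy)
  rw [parallel, Multiset.count_add, Multiset.count_map_eq_count' _ _ (image_injective hinj),
    Multiset.count_eq_zero_of_notMem hnot, add_zero]

lemma erase_parallel_left [DecidableEq A₁] (hg : Function.Bijective (Sum.elim g₁ g₂))
    {w₁ : Multiset (Finset A₁)} (w₂ : Multiset (Finset A₂)) {p : Finset A₁} (hp : p ∈ w₁) :
    (parallel g₁ g₂ w₁ w₂).erase (p.image g₁) = parallel g₁ g₂ (w₁.erase p) w₂ := by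
  have hinj : Function.Injective g₁ := hg.1.comp Sum.inl_injective
  rw [parallel, parallel, Multiset.erase_add_left_pos _ (Multiset.mem_map_of_mem _ hp),
    Multiset.map_erase _ (image_injective hinj)]

lemma count_parallel_right [DecidableEq A₂] (hg : Function.Bijective (Sum.elim g₁ g₂))
    (w₁ : Multiset (Finset A₁)) (w₂ : Multiset (Finset A₂)) {p : Finset A₂} (hp : p.Nonempty) :
    (parallel g₁ g₂ w₁ w₂).count (p.image g₂) = w₂.count p := by
  rw [parallel_comm, count_parallel_left (bijective_sumElim_swap hg) _ _ hp]

lemma erase_parallel_right [DecidableEq A₂] (hg : Function.Bijective (Sum.elim g₁ g₂))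
    (w₁ : Multiset (Finset A₁)) {w₂ : Multiset (Finset A₂)} {p : Finset A₂} (hp : p ∈ w₂) :
    (parallel g₁ g₂ w₁ w₂).erase (p.image g₂) = parallel g₁ g₂ w₁ (w₂.erase p) := by
  rw [parallel_comm, erase_parallel_left (bijective_sumElim_swap hg) _ hp, parallel_comm]

lemma potential_parallel [DecidableEq A₁] [DecidableEq A₂] [Fintype A₁] [Fintype A₂] [Fintype B]
    (hg : Function.Bijective (Sum.elim g₁ g₂)) (D : B → ℕ → ℝ) (w₁ : Multiset (Finset A₁))
    (w₂ : Multiset (Finset A₂)) :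
    potential D (parallel g₁ g₂ w₁ w₂)
      = potential (fun a => D (g₁ a)) w₁ + potential (fun a => D (g₂ a)) w₂ := by
  rw [potential_eq_of_bijective hg]
  simp only [load_parallel_left hg]
  rw [parallel_comm]
  simp only [load_parallel_left (bijective_sumElim_swap hg), potential]

variable [DecidableEq A₁] [DecidableEq A₂] [Fintype A₁] [Fintype A₂] [Fintype B]
  {D : B → ℕ → ℝ} {w₁ w₁' : Multiset (Finset A₁)} {w₂ w₂' : Multiset (Finset A₂)}

lemma transferLE_parallel_left (hg : Function.Bijective (Sum.elim g₁ g₂)) {p : Finset A₁}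
    (hp : p ∈ w₁) (h : TransferLE (fun a => D (g₁ a)) w₁ w₁' p) :
    TransferLE D (parallel g₁ g₂ w₁ w₂) (parallel g₁ g₂ w₁' w₂') (p.image g₁) := by
  rw [TransferLE] at h ⊢
  rw [erase_parallel_left hg _ hp, cons_parallel_left]
  simp only [potential_parallel hg]
  linarith

lemma swapLE_parallel_left (hg : Function.Bijective (Sum.elim g₁ g₂)) {p q : Finset A₁}
    (hp : p ∈ w₁) (hq : q ∈ w₁') (h : SwapLE (fun a => D (g₁ a)) w₁ w₁' p q) :
    SwapLE D (parallel g₁ g₂ w₁ w₂) (parallel g₁ g₂ w₁' w₂') (p.image g₁) (q.image g₁) := by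
  rw [SwapLE] at h ⊢
  rw [erase_parallel_left hg _ hp, cons_parallel_left, erase_parallel_left hg _ hq,
    cons_parallel_left]
  simp only [potential_parallel hg]
  linarith

lemma swapLE_parallel_left_right (hg : Function.Bijective (Sum.elim g₁ g₂)) {p : Finset A₁}
    {q : Finset A₂} (hp : p ∈ w₁) (hq : q ∈ w₂') (h₁ : TransferLE (fun a => D (g₁ a)) w₁ w₁' p)
    (h₂ : TransferLE (fun a => D (g₂ a)) w₂' w₂ q) :
    SwapLE D (parallel g₁ g₂ w₁ w₂) (parallel g₁ g₂ w₁' w₂') (p.image g₁) (q.image g₂) := by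
  rw [TransferLE] at h₁ h₂
  rw [SwapLE, erase_parallel_left hg _ hp, cons_parallel_right, erase_parallel_right hg _ hq,
    cons_parallel_left]
  simp only [potential_parallel hg]
  linarith

variable {S₁ : Finset (Finset A₁)} {S₂ : Finset (Finset A₂)}

lemma nonempty_of_mem {A : Type*} {S : Finset (Finset A)} (hS : ∅ ∉ S) {w : Multiset (Finset A)}
    (hw : ∀ P ∈ w, P ∈ S) {p : Finset A} (hp : p ∈ w) : p.Nonempty :=
  nonempty_iff_ne_empty.2 fun h => hS (h ▸ hw p hp)

lemma exists_transfer_parallel_left (hg : Function.Bijective (Sum.elim g₁ g₂))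
    (hS₁ : HasTransfer S₁) (hne₁ : ∅ ∉ S₁) (hD : ∀ r, Monotone (D r))
    (hw₁ : ∀ P ∈ w₁, P ∈ S₁) (hw₁' : ∀ P ∈ w₁', P ∈ S₁)
    (hcard : Multiset.card w₁' < Multiset.card w₁) :
    ∃ p, (parallel g₁ g₂ w₁' w₂').count p < (parallel g₁ g₂ w₁ w₂).count p ∧
      TransferLE D (parallel g₁ g₂ w₁ w₂) (parallel g₁ g₂ w₁' w₂') p := by
  obtain ⟨p, hp, hineq⟩ := hS₁ _ (fun a => hD (g₁ a)) w₁ w₁' hw₁ hw₁' hcard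
  have hpw : p ∈ w₁ := Multiset.count_pos.1 (by omega)
  have hpne := nonempty_of_mem hne₁ hw₁ hpw
  exact ⟨p.image g₁, by rwa [count_parallel_left hg _ _ hpne, count_parallel_left hg _ _ hpne],
    transferLE_parallel_left hg hpw hineq⟩

lemma hasTransfer_parallel (hg : Function.Bijective (Sum.elim g₁ g₂)) (hS₁ : HasTransfer S₁)
    (hS₂ : HasTransfer S₂) (hne₁ : ∅ ∉ S₁) (hne₂ : ∅ ∉ S₂) :
    HasTransfer (S₁.image (image g₁) ∪ S₂.image (image g₂)) := by
  intro D hD z z' hz hz' hcard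
  obtain ⟨w₁, w₂, hw₁, hw₂, rfl⟩ := exists_eq_parallel hz
  obtain ⟨w₁', w₂', hw₁', hw₂', rfl⟩ := exists_eq_parallel hz'
  rw [card_parallel, card_parallel] at hcard
  rcases lt_or_ge (Multiset.card w₁') (Multiset.card w₁) with h | h
  · exact exists_transfer_parallel_left hg hS₁ hne₁ hD hw₁ hw₁' h
  · rw [parallel_comm w₁, parallel_comm w₁']
    exact exists_transfer_parallel_left (bijective_sumElim_swap hg) hS₂ hne₂ hD hw₂ hw₂'
      (by omega)

lemma exchangeAt_parallel_left (hg : Function.Bijective (Sum.elim g₁ g₂))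
    (hX₁ : HasExchange S₁) (hT₂ : HasTransfer S₂) (hne₁ : ∅ ∉ S₁) (hne₂ : ∅ ∉ S₂)
    (hD : ∀ r, Monotone (D r)) (hw₁ : ∀ P ∈ w₁, P ∈ S₁) (hw₁' : ∀ P ∈ w₁', P ∈ S₁)
    (hw₂ : ∀ P ∈ w₂, P ∈ S₂) (hw₂' : ∀ P ∈ w₂', P ∈ S₂) {p : Finset A₁}
    (hp : w₁'.count p < w₁.count p) :
    ExchangeAt D (parallel g₁ g₂ w₁ w₂) (parallel g₁ g₂ w₁' w₂') (p.image g₁) := by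
  have hpw : p ∈ w₁ := Multiset.count_pos.1 (by omega)
  rcases hX₁ _ (fun a => hD (g₁ a)) w₁ w₁' hw₁ hw₁' p hp with ⟨hcard, hineq⟩ | ⟨q, hq, hineq⟩
  · by_cases htot : Multiset.card (parallel g₁ g₂ w₁' w₂') < Multiset.card (parallel g₁ g₂ w₁ w₂)
    · exact Or.inl ⟨htot, transferLE_parallel_left hg hpw hineq⟩
    -- then `w₂'` is larger than `w₂`, and a transfer back from `w₂'` completes a swap
    rw [card_parallel, card_parallel] at htot
    obtain ⟨s, hs, hineq₂⟩ := hT₂ _ (fun a => hD (g₂ a)) w₂' w₂ hw₂' hw₂ (by omega)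
    have hsw : s ∈ w₂' := Multiset.count_pos.1 (by omega)
    have hsne := nonempty_of_mem hne₂ hw₂' hsw
    refine Or.inr ⟨s.image g₂, ?_, swapLE_parallel_left_right hg hpw hsw hineq hineq₂⟩
    rwa [count_parallel_right hg _ _ hsne, count_parallel_right hg _ _ hsne]
  · have hqw : q ∈ w₁' := Multiset.count_pos.1 (by omega)
    have hqne := nonempty_of_mem hne₁ hw₁' hqw
    refine Or.inr ⟨q.image g₁, ?_, swapLE_parallel_left hg hpw hqw hineq⟩
    rwa [count_parallel_left hg _ _ hqne, count_parallel_left hg _ _ hqne]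

lemma hasExchange_parallel (hg : Function.Bijective (Sum.elim g₁ g₂))
    (hT₁ : HasTransfer S₁) (hT₂ : HasTransfer S₂) (hX₁ : HasExchange S₁) (hX₂ : HasExchange S₂)
    (hne₁ : ∅ ∉ S₁) (hne₂ : ∅ ∉ S₂) :
    HasExchange (S₁.image (image g₁) ∪ S₂.image (image g₂)) := by
  intro D hD z z' hz hz' p hp
  obtain ⟨w₁, w₂, hw₁, hw₂, rfl⟩ := exists_eq_parallel hz
  obtain ⟨w₁', w₂', hw₁', hw₂', rfl⟩ := exists_eq_parallel hz'
  rcases Multiset.mem_add.1 (Multiset.count_pos.1 (Nat.zero_lt_of_lt hp)) with h | h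
  · obtain ⟨p, hpw, rfl⟩ := Multiset.mem_map.1 h
    have hpne := nonempty_of_mem hne₁ hw₁ hpw
    rw [count_parallel_left hg _ _ hpne, count_parallel_left hg _ _ hpne] at hp
    exact exchangeAt_parallel_left hg hX₁ hT₂ hne₁ hne₂ hD hw₁ hw₁' hw₂ hw₂' hp
  · obtain ⟨p, hpw, rfl⟩ := Multiset.mem_map.1 h
    have hpne := nonempty_of_mem hne₂ hw₂ hpw
    rw [count_parallel_right hg _ _ hpne, count_parallel_right hg _ _ hpne] at hp
    rw [parallel_comm w₁, parallel_comm w₁']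
    exact exchangeAt_parallel_left (bijective_sumElim_swap hg) hX₂ hT₁ hne₂ hne₁ hD hw₂ hw₂' hw₁
      hw₁' hp

end Parallel

end PathConfig

namespace EPTree

open Finset PathConfig

lemma empty_notMem_paths : ∀ t : EPTree, ∅ ∉ t.paths
  | edge => fun h => univ_nonempty.ne_empty (mem_singleton.1 h).symm
  | parallel t₁ t₂ => by
      simp only [paths, mem_union, mem_image, not_or, not_exists, not_and]
      exact ⟨fun P hP h => t₁.empty_notMem_paths (image_eq_empty.1 h ▸ hP),
        fun P hP h => t₂.empty_notMem_paths (image_eq_empty.1 h ▸ hP)⟩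
  | extHead t | extTail t => by
      simp only [paths, mem_image, not_exists, not_and]
      exact fun _ _ => insert_ne_empty _ _

lemma bijective_sumElim_inl_unit (β : Type*) :
    Function.Bijective (Sum.elim (fun _ : Unit => (Sum.inl () : Unit ⊕ β)) Sum.inr) := by
  convert Function.bijective_id
  ext x; cases x <;> rfl

lemma bijective_sumElim_inr_unit (β : Type*) :
    Function.Bijective (Sum.elim (fun _ : Unit => (Sum.inr () : β ⊕ Unit)) Sum.inl) := by
  convert (Equiv.sumComm Unit β).bijective
  ext x; cases x <;> rfl

lemma bijective_sumElim_inl_inr (α β : Type*) :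
    Function.Bijective (Sum.elim (Sum.inl : α → α ⊕ β) Sum.inr) :=
  Sum.elim_inl_inr ▸ Function.bijective_id

theorem hasTransfer_paths : ∀ t : EPTree, HasTransfer t.paths
  | edge => hasTransfer_singleton _
  | parallel t₁ t₂ => hasTransfer_parallel (bijective_sumElim_inl_inr _ _) t₁.hasTransfer_paths
      t₂.hasTransfer_paths t₁.empty_notMem_paths t₂.empty_notMem_paths
  | extHead t => hasTransfer_extend (bijective_sumElim_inl_unit _) t.hasTransfer_paths
  | extTail t => hasTransfer_extend (bijective_sumElim_inr_unit _) t.hasTransfer_paths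

theorem hasExchange_paths : ∀ t : EPTree, HasExchange t.paths
  | edge => hasExchange_singleton _
  | parallel t₁ t₂ => hasExchange_parallel (bijective_sumElim_inl_inr _ _) t₁.hasTransfer_paths
      t₂.hasTransfer_paths t₁.hasExchange_paths t₂.hasExchange_paths t₁.empty_notMem_paths
      t₂.empty_notMem_paths
  | extHead t => hasExchange_extend (bijective_sumElim_inl_unit _) t.hasExchange_paths
  | extTail t => hasExchange_extend (bijective_sumElim_inr_unit _) t.hasExchange_paths

end EPTree

namespace PathConfig

open Finset

section Minimizer

variable {R : Type*} [DecidableEq R] [Fintype R] {S : Finset (Finset R)} {D : R → ℕ → ℝ}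
  {m : ℕ}

variable (S D) in
structure IsMinimizer (m : ℕ) (c z : Multiset (Finset R)) : Prop where
  mem : ∀ P ∈ z, P ∈ S
  card_eq : Multiset.card z = m
  le : c ≤ z
  potential_le : ∀ y : Multiset (Finset R), (∀ P ∈ y, P ∈ S) → Multiset.card y = m → c ≤ y →
    potential D z ≤ potential D y

variable (S D) in
def PotentialGeneric (N : ℕ) : Prop :=
  ∀ z : Multiset (Finset R), (∀ P ∈ z, P ∈ S) → Multiset.card z < N →
    ∀ p ∈ S, ∀ q ∈ S, p ≠ q → potential D (p ::ₘ z) ≠ potential D (q ::ₘ z)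

lemma PotentialGeneric.mono {N N' : ℕ} (h : PotentialGeneric S D N) (hN : N' ≤ N) :
    PotentialGeneric S D N' :=
  fun z hz hcard => h z hz (hcard.trans_le hN)

lemma PotentialGeneric.shiftDelay {N : ℕ} (h : PotentialGeneric S D (N + 1)) {a : Finset R}
    (ha : a ∈ S) : PotentialGeneric S (shiftDelay D a) N := by
  intro z hz hcard p hp q hq hpq heq
  refine h (a ::ₘ z) (Multiset.forall_mem_cons.2 ⟨ha, hz⟩) (by simpa using hcard) p hp q hq hpq ?_
  have hp' := potential_shiftDelay D a (p ::ₘ z)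
  have hq' := potential_shiftDelay D a (q ::ₘ z)
  rw [Multiset.cons_swap] at hp' hq'
  linarith

lemma isMinimizer_zero : IsMinimizer S D 0 0 0 :=
  ⟨by simp, rfl, le_rfl, fun y _ hy _ => by rw [Multiset.card_eq_zero.1 hy]⟩

lemma IsMinimizer.of_potential_le {c z y : Multiset (Finset R)} (hz : IsMinimizer S D m c z)
    (hy : ∀ P ∈ y, P ∈ S) (hcard : Multiset.card y = m) (hc : c ≤ y)
    (hle : potential D y ≤ potential D z) : IsMinimizer S D m c y :=
  ⟨hy, hcard, hc, fun x hx hxm hcx => hle.trans (hz.potential_le x hx hxm hcx)⟩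

lemma IsMinimizer.constrain {c z : Multiset (Finset R)} (hz : IsMinimizer S D m 0 z)
    (hc : c ≤ z) : IsMinimizer S D m c z :=
  ⟨hz.mem, hz.card_eq, hc, fun y hy hcard _ => hz.potential_le y hy hcard (Multiset.zero_le _)⟩

lemma exists_isMinimizer (hS : S.Nonempty) (m : ℕ) : ∃ z, IsMinimizer S D m 0 z := by
  obtain ⟨P, hP⟩ := hS
  have hne : ((S.sym m).image fun x : Sym (Finset R) m => (x : Multiset (Finset R))).Nonempty :=
    ⟨_, mem_image_of_mem _ (mem_sym_iff.2 fun Q hQ => (Sym.mem_replicate.1 hQ).2 ▸ hP :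
      Sym.replicate m P ∈ S.sym m)⟩
  obtain ⟨z, hz, hmin⟩ := exists_min_image _ (potential D) hne
  obtain ⟨x, hx, rfl⟩ := mem_image.1 hz
  refine ⟨x, mem_sym_iff.1 hx, x.2, Multiset.zero_le _, fun y hy hcard _ => ?_⟩
  exact hmin y (mem_image.2 ⟨⟨y, hcard⟩, mem_sym_iff.2 hy, rfl⟩)

lemma le_erase_of_count_lt {α : Type*} [DecidableEq α] {c z z' : Multiset α} {p : α} (hc : c ≤ z)
    (hc' : c ≤ z') (hp : z'.count p < z.count p) : c ≤ z.erase p := by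
  rw [Multiset.le_iff_count] at hc hc' ⊢
  intro x
  rcases eq_or_ne x p with rfl | hx
  · rw [Multiset.count_erase_self]; have := hc' x; omega
  · rw [Multiset.count_erase_of_ne hx]; exact hc x

/-- Two minimizers differing in a path `p` would, by the exchange property, allow a swap of
`p` against some `q` that keeps both minimal; genericity forbids the resulting tie. -/
lemma IsMinimizer.eq (hX : HasExchange S) (hD : ∀ r, Monotone (D r))
    (hgen : PotentialGeneric S D m) {c z z' : Multiset (Finset R)} (h : IsMinimizer S D m c z)
    (h' : IsMinimizer S D m c z') : z = z' := by
  by_contra hne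
  obtain ⟨p, hp⟩ : ∃ p, z'.count p < z.count p := by
    by_contra! hle
    exact hne (Multiset.eq_of_le_of_card_le (Multiset.le_iff_count.2 hle)
      (by rw [h.card_eq, h'.card_eq]))
  rcases hX D hD z z' h.mem h'.mem p hp with ⟨hcard, -⟩ | ⟨q, hq, hswap⟩
  · rw [h.card_eq, h'.card_eq] at hcard
    exact lt_irrefl m hcard
  have hpz : p ∈ z := Multiset.count_pos.1 (by omega)
  have hqz' : q ∈ z' := Multiset.count_pos.1 (by omega)
  have hpq : p ≠ q := by rintro rfl; omega
  have h₁ := h.potential_le (q ::ₘ z.erase p)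
    (Multiset.forall_mem_cons.2 ⟨h'.mem q hqz', fun P hP => h.mem P (Multiset.mem_of_mem_erase hP)⟩)
    (by rw [Multiset.card_cons, Multiset.card_erase_add_one hpz, h.card_eq])
    ((le_erase_of_count_lt h.le h'.le hp).trans (Multiset.le_cons_self _ _))
  have h₂ := h'.potential_le (p ::ₘ z'.erase q)
    (Multiset.forall_mem_cons.2 ⟨h.mem p hpz, fun P hP => h'.mem P (Multiset.mem_of_mem_erase hP)⟩)
    (by rw [Multiset.card_cons, Multiset.card_erase_add_one hqz', h'.card_eq])
    ((le_erase_of_count_lt h'.le h.le hq).trans (Multiset.le_cons_self _ _))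
  refine hgen (z.erase p) (fun P hP => h.mem P (Multiset.mem_of_mem_erase hP))
    (by rw [← h.card_eq, ← Multiset.card_erase_add_one hpz]; omega) p (h.mem p hpz) q
    (h'.mem q hqz') hpq ?_
  rw [Multiset.cons_erase hpz]
  rw [SwapLE] at hswap
  linarith

lemma isMinimizer_cons_of_shiftDelay {a : Finset R} (ha : a ∈ S) {z : Multiset (Finset R)}
    (h : IsMinimizer S (shiftDelay D a) m 0 z) : IsMinimizer S D (m + 1) {a} (a ::ₘ z) := by
  refine ⟨Multiset.forall_mem_cons.2 ⟨ha, h.mem⟩, by rw [Multiset.card_cons, h.card_eq],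
    Multiset.singleton_le.2 (Multiset.mem_cons_self _ _), fun y hy hcard hay => ?_⟩
  have hay : a ∈ y := Multiset.singleton_le.1 hay
  have hle := h.potential_le (y.erase a) (fun P hP => hy P (Multiset.mem_of_mem_erase hP))
    (by rw [← Nat.add_right_cancel_iff, Multiset.card_erase_add_one hay, hcard])
    (Multiset.zero_le _)
  have hz := potential_shiftDelay D a z
  have hy' := potential_shiftDelay D a (y.erase a)
  rw [Multiset.cons_erase hay] at hy'
  linarith

lemma IsMinimizer.eq_cons_of_mem (hX : HasExchange S) (hD : ∀ r, Monotone (D r))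
    (hgen : PotentialGeneric S D (m + 1)) {M N : Multiset (Finset R)} {a : Finset R}
    (hM : IsMinimizer S D (m + 1) 0 M) (ha : a ∈ M) (hN : IsMinimizer S (shiftDelay D a) m 0 N) :
    M = a ::ₘ N :=
  (hM.constrain (Multiset.singleton_le.2 ha)).eq hX hD hgen
    (isMinimizer_cons_of_shiftDelay (hM.mem a ha) hN)

/-- Minimizers are nested: by the transfer property, a path of a larger minimizer can be
added to a smaller one without losing minimality. -/
lemma IsMinimizer.le_of_le (hT : HasTransfer S) (hX : HasExchange S) (hD : ∀ r, Monotone (D r))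
    {j : ℕ} {zj zm : Multiset (Finset R)} (hj : IsMinimizer S D j 0 zj) (hjm : j ≤ m)
    (hgen : PotentialGeneric S D m) (hm : IsMinimizer S D m 0 zm) : zj ≤ zm := by
  induction hjm generalizing zm with
  | refl => exact (hj.eq hX hD hgen hm).le
  | @step m hjm ih =>
    obtain ⟨P, hP⟩ := Multiset.card_pos_iff_exists_mem.1 (hm.card_eq ▸ m.succ_pos)
    obtain ⟨zmid, hmid⟩ := exists_isMinimizer (D := D) ⟨P, hm.mem P hP⟩ m
    obtain ⟨p, hp, htr⟩ := hT D hD zm zmid hm.mem hmid.mem (by rw [hm.card_eq, hmid.card_eq]; omega)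
    have hpz : p ∈ zm := Multiset.count_pos.1 (by omega)
    have hle := hmid.potential_le (zm.erase p) (fun Q hQ => hm.mem Q (Multiset.mem_of_mem_erase hQ))
      (by rw [← Nat.add_right_cancel_iff, Multiset.card_erase_add_one hpz, hm.card_eq])
      (Multiset.zero_le _)
    rw [TransferLE] at htr
    have hmin : IsMinimizer S D (m + 1) 0 (p ::ₘ zmid) :=
      hm.of_potential_le (Multiset.forall_mem_cons.2 ⟨hm.mem p hpz, hmid.mem⟩)
        (by rw [Multiset.card_cons, hmid.card_eq]) (Multiset.zero_le _) (by linarith)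
    rw [hm.eq hX hD hgen hmin]
    exact (ih (hgen.mono m.le_succ) hmid).trans (Multiset.le_cons_self _ _)

lemma exists_isMinimizer_cons_erase (hX : HasExchange S) (hD : ∀ r, Monotone (D r))
    {b : Finset R} {M Z : Multiset (Finset R)} (hZ : IsMinimizer S D m {b} Z)
    (hM : IsMinimizer S D m 0 M) (hb : b ∉ M) :
    ∃ q ∈ M, IsMinimizer S D m 0 (q ::ₘ Z.erase b) := by
  have hbZ : b ∈ Z := Multiset.singleton_le.1 hZ.le
  have hcount : M.count b < Z.count b := by
    rw [Multiset.count_eq_zero_of_notMem hb]; exact Multiset.count_pos.2 hbZ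
  rcases hX D hD Z M hZ.mem hM.mem b hcount with ⟨hcard, -⟩ | ⟨q, hq, hswap⟩
  · rw [hZ.card_eq, hM.card_eq] at hcard
    exact (lt_irrefl m hcard).elim
  have hqM : q ∈ M := Multiset.count_pos.1 (by omega)
  have hle := hZ.potential_le (b ::ₘ M.erase q)
    (Multiset.forall_mem_cons.2 ⟨hZ.mem b hbZ, fun P hP => hM.mem P (Multiset.mem_of_mem_erase hP)⟩)
    (by rw [Multiset.card_cons, Multiset.card_erase_add_one hqM, hM.card_eq])
    (Multiset.singleton_le.2 (Multiset.mem_cons_self _ _))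
  refine ⟨q, hqM, hM.of_potential_le
    (Multiset.forall_mem_cons.2 ⟨hM.mem q hqM, fun P hP => hZ.mem P (Multiset.mem_of_mem_erase hP)⟩)
    (by rw [Multiset.card_cons, Multiset.card_erase_add_one hbZ, hZ.card_eq]) (Multiset.zero_le _)
    ?_⟩
  rw [SwapLE] at hswap
  linarith

/-- The greedy step behind subgame perfection. If `b` lies outside a minimizer `M`, exchanging
`b` against some `q ∈ M` gives the minimizer `q ::ₘ N b`, which by uniqueness is `q ::ₘ N q`;
the first player's preference for `b` over `q` then makes `b ::ₘ N b` minimal as well. -/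
lemma isMinimizer_cons_of_forall_pathCost_le (hX : HasExchange S) (hD : ∀ r, Monotone (D r))
    (hgen : PotentialGeneric S D (m + 1)) {N : Finset R → Multiset (Finset R)}
    (hN : ∀ a ∈ S, IsMinimizer S (shiftDelay D a) m 0 (N a)) {b : Finset R} (hb : b ∈ S)
    (hopt : ∀ a ∈ S, pathCost D (b ::ₘ N b) b ≤ pathCost D (a ::ₘ N a) a) :
    IsMinimizer S D (m + 1) 0 (b ::ₘ N b) := by
  obtain ⟨M, hM⟩ := exists_isMinimizer (D := D) ⟨b, hb⟩ (m + 1)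
  by_cases hbM : b ∈ M
  · rw [← hM.eq_cons_of_mem hX hD hgen hbM (hN b hb)]
    exact hM
  have hZ := isMinimizer_cons_of_shiftDelay hb (hN b hb)
  obtain ⟨q, hqM, hM'⟩ := exists_isMinimizer_cons_erase hX hD hZ hM hbM
  rw [Multiset.erase_cons_head] at hM'
  have hqS := hM.mem q hqM
  have hNq : N q = N b := (Multiset.cons_inj_right q).1
    (hM'.eq_cons_of_mem hX hD hgen (Multiset.mem_cons_self _ _) (hN q hqS)).symm
  have hcost := hopt q hqS
  rw [pathCost_cons_self_eq_sub, pathCost_cons_self_eq_sub, hNq] at hcost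
  exact hM'.of_potential_le hZ.mem hZ.card_eq (Multiset.zero_le _) (by linarith)

end Minimizer

section Profile

variable {R : Type*} {m : ℕ}

def ofProfile (A : Fin m → Finset R) : Multiset (Finset R) :=
  univ.val.map A

@[simp] lemma ofProfile_cons (a : Finset R) (B : Fin m → Finset R) :
    ofProfile (Fin.cons a B : Fin (m + 1) → Finset R) = a ::ₘ ofProfile B := by
  simp [ofProfile, Fin.univ_val_map, List.ofFn_succ]

@[simp] lemma ofProfile_fin_zero (A : Fin 0 → Finset R) : ofProfile A = 0 := by
  simp [ofProfile]

lemma ofProfile_get (L : List (Finset R)) : ofProfile L.get = L := by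
  rw [ofProfile, Fin.univ_val_map, List.ofFn_get]

lemma mem_ofProfile {A : Fin m → Finset R} {P : Finset R} : P ∈ ofProfile A ↔ ∃ i, A i = P := by
  simp [ofProfile]

lemma load_ofProfile [DecidableEq R] (A : Fin m → Finset R) (r : R) :
    load (ofProfile A) r = (univ.filter fun i => r ∈ A i).card := by
  rw [load, ofProfile, Multiset.countP_map, card_def, filter_val]

end Profile

end PathConfig

namespace CGame

open Finset PathConfig

variable {R : Type} [DecidableEq R] [Fintype R] {S : Finset (Finset R)} {D : R → ℕ → ℝ}
  {m : ℕ}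

variable (S D m) in
def symmetric : CGame R m where
  actions := fun _ => S
  delay := D

lemma cost_symmetric (A : Fin m → Finset R) (i : Fin m) :
    (symmetric S D m).cost A i = pathCost D (ofProfile A) (A i) := by
  simp only [cost, congestion, pathCost, load_ofProfile]
  rfl

lemma cost_symmetric_cons_zero (a : Finset R) (B : Fin m → Finset R) :
    (symmetric S D (m + 1)).cost (Fin.cons a B) 0 = pathCost D (a ::ₘ ofProfile B) a := by
  rw [cost_symmetric, ofProfile_cons, Fin.cons_zero]

lemma cost_symmetric_cons_succ (a : Finset R) (B : Fin m → Finset R) (i : Fin m) :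
    (symmetric S D (m + 1)).cost (Fin.cons a B) i.succ
      = (symmetric S (shiftDelay D a) m).cost B i := by
  rw [cost_symmetric, cost_symmetric, ofProfile_cons, Fin.cons_succ, pathCost_shiftDelay]

lemma costOn_map_castLE {n : ℕ} (h : m ≤ n) (G : CGame R n) (A : Fin n → Finset R)
    (i : Fin m) : G.costOn (univ.map (Fin.castLEEmb h)) A (Fin.castLE h i)
      = pathCost G.delay (ofProfile (A ∘ Fin.castLE h)) (A (Fin.castLE h i)) := by
  refine sum_congr rfl fun r _ => ?_
  rw [load_ofProfile, filter_map, card_map]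
  rfl

/-- Let the first players play the paths of `z` and then `p` or `q`: genericity of the game
restricted to them separates the two potentials. -/
lemma Generic.potentialGeneric {n : ℕ} (hgen : (symmetric S D n).Generic) :
    PotentialGeneric S D n := by
  intro z hz hcard p hp q hq hpq heq
  obtain ⟨L, rfl⟩ : ∃ L : List (Finset R), (L : Multiset (Finset R)) = z :=
    ⟨z.toList, Multiset.coe_toList z⟩
  have h : L.length + 1 ≤ n := by simpa using hcard
  let B (c : Finset R) : Fin (L.length + 1) → Finset R := Fin.cons c L.get
  let A (c : Finset R) : Fin n → Finset R :=
    fun i => if hi : (i : ℕ) < L.length + 1 then B c ⟨i, hi⟩ else ∅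
  have hAB (c : Finset R) : A c ∘ Fin.castLE h = B c := funext fun i => dif_pos i.isLt
  have hvalid (c : Finset R) (hc : c ∈ S) :
      ∀ i ∈ univ.map (Fin.castLEEmb h), A c i ∈ (symmetric S D n).actions i := by
    simp only [mem_map, mem_univ, true_and, forall_exists_index]
    rintro _ i rfl
    show (A c ∘ Fin.castLE h) i ∈ S
    rw [hAB]
    exact Fin.cases hc (fun j => hz _ (List.getElem_mem _)) i
  have hcost (c : Finset R) : (symmetric S D n).costOn (univ.map (Fin.castLEEmb h)) (A c)
      (Fin.castLE h 0) = PathConfig.potential D (c ::ₘ ↑L) - PathConfig.potential D ↑L := by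
    rw [costOn_map_castLE, hAB, ← pathCost_cons_self_eq_sub, ← ofProfile_get L, ← ofProfile_cons]
    rfl
  exact hgen _ (A p) (A q) (hvalid p hp) (hvalid q hq) (Fin.castLE h 0)
    (mem_map_of_mem _ (mem_univ 0)) hpq (by rw [hcost, hcost, heq])

theorem IsSPO.isMinimizer (hX : HasExchange S) :
    ∀ {m : ℕ} {D : R → ℕ → ℝ} {A : Fin m → Finset R}, (∀ r, Monotone (D r)) →
      PotentialGeneric S D m → (symmetric S D m).IsSPO A → IsMinimizer S D m 0 (ofProfile A)
  | 0, _, _, _, _, _ => by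
    rw [ofProfile_fin_zero]
    exact isMinimizer_zero
  | m + 1, D, A, hD, hgen, ⟨hA0, f, hf, hftail, hopt⟩ => by
    have hN : ∀ a ∈ S, IsMinimizer S (shiftDelay D a) m 0 (ofProfile (f a)) := fun a ha =>
      IsSPO.isMinimizer hX (shiftDelay_monotone hD a) (hgen.shiftDelay ha) (hf a ha)
    rw [← Fin.cons_self_tail A, ← hftail, ofProfile_cons]
    refine isMinimizer_cons_of_forall_pathCost_le hX hD hgen hN hA0 fun a ha => ?_
    simpa only [cost_symmetric_cons_zero] using hopt a ha

theorem IsSPO.monotone_cost (hX : HasExchange S) :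
    ∀ {m : ℕ} {D : R → ℕ → ℝ} {A : Fin m → Finset R}, (∀ r, Monotone (D r)) →
      PotentialGeneric S D m → (symmetric S D m).IsSPO A → Monotone ((symmetric S D m).cost A)
  | 0, _, _, _, _, _ => fun i => i.elim0
  | m + 1, D, A, hD, hgen, hA => by
    have hmin := hA.isMinimizer hX hD hgen
    obtain ⟨hA0, f, hf, hftail, hopt⟩ := hA
    have hA : A = Fin.cons (A 0) (f (A 0)) := by rw [hftail, Fin.cons_self_tail]
    -- whatever path a later player uses, the first player could have chosen it instead
    have hfirst (j : Fin (m + 1)) : (symmetric S D _).cost A 0 ≤ (symmetric S D _).cost A j := by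
      have hj : A j ∈ ofProfile A := mem_ofProfile.2 ⟨j, rfl⟩
      have hjS := hmin.mem _ hj
      have hsplit := hmin.eq_cons_of_mem hX hD hgen hj
        ((hf (A j) hjS).isMinimizer hX (shiftDelay_monotone hD _) (hgen.shiftDelay hjS))
      calc (symmetric S D _).cost A 0
          = (symmetric S D _).cost (Fin.cons (A 0) (f (A 0))) 0 := by rw [← hA]
        _ ≤ (symmetric S D _).cost (Fin.cons (A j) (f (A j))) 0 := hopt (A j) hjS
        _ = (symmetric S D _).cost A j := by rw [cost_symmetric_cons_zero, ← hsplit, cost_symmetric]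
    have hsucc (i : Fin m) : (symmetric S D _).cost A i.succ
        = (symmetric S (shiftDelay D (A 0)) m).cost (f (A 0)) i := by
      conv_lhs => rw [hA]
      exact cost_symmetric_cons_succ _ _ _
    have htail := (hf (A 0) hA0).monotone_cost hX (shiftDelay_monotone hD _) (hgen.shiftDelay hA0)
    intro i j hij
    cases i using Fin.cases with
    | zero => exact hfirst j
    | succ i =>
      cases j using Fin.cases with
      | zero => exact absurd hij (not_le.2 (Fin.succ_pos i))
      | succ j => rw [hsucc, hsucc]; exact htail (Fin.succ_le_succ_iff.1 hij)

/-- The first move of a `k`-lookahead outcome lies in a minimizer for fewer players, hence,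
by nesting, in the minimizer for all players. -/
theorem IsKLA.isMinimizer (hT : HasTransfer S) (hX : HasExchange S) {k : ℕ} :
    ∀ {m : ℕ} {D : R → ℕ → ℝ} {A : Fin m → Finset R}, (∀ r, Monotone (D r)) →
      PotentialGeneric S D m → IsKLA k (symmetric S D m) A → IsMinimizer S D m 0 (ofProfile A)
  | 0, _, _, _, _, _ => by
    rw [ofProfile_fin_zero]
    exact isMinimizer_zero
  | m + 1, D, A, hD, hgen, ⟨⟨_, B, hB, hB0⟩, htail⟩ => by
    have hBmin : IsMinimizer S D (min k (m + 1)) 0 (ofProfile B) :=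
      IsSPO.isMinimizer hX hD (hgen.mono (min_le_right _ _)) hB
    have hA0B : A 0 ∈ ofProfile B := mem_ofProfile.2 ⟨_, hB0⟩
    obtain ⟨M, hM⟩ := exists_isMinimizer (D := D) ⟨A 0, hBmin.mem _ hA0B⟩ (m + 1)
    have hA0M : A 0 ∈ M :=
      Multiset.mem_of_le (hBmin.le_of_le hT hX hD (min_le_right _ _) hgen hM) hA0B
    have htail' := IsKLA.isMinimizer hT hX (shiftDelay_monotone hD _)
      (hgen.shiftDelay (hM.mem _ hA0M)) htail
    rw [← Fin.cons_self_tail A, ofProfile_cons, ← hM.eq_cons_of_mem hX hD hgen hA0M htail']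
    exact hM

end CGame

theorem ep_generic_spo_first_player_general (t : EPTree) (d : t.Arc → ℕ → ℝ)
    (hmono : ∀ r, Monotone (d r))
    (n : ℕ) (hn : 0 < n) (hgen : CGame.Generic (SNCGep t d n))
    (B : Fin n → Finset t.Arc) (hB : CGame.IsSPO (SNCGep t d n) B) :
    (∀ i j : Fin n, i ≤ j →
      CGame.cost (SNCGep t d n) B i ≤ CGame.cost (SNCGep t d n) B j) ∧
    (∀ k, 1 ≤ k → k ≤ n → ∀ A, CGame.IsKLA k (SNCGep t d n) A →
      CGame.cost (SNCGep t d n) B ⟨0, hn⟩ ≤ CGame.cost (SNCGep t d n) A ⟨0, hn⟩) := by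
  have hG : SNCGep t d n = CGame.symmetric t.paths d n := rfl
  rw [hG] at hgen hB ⊢
  have hX := t.hasExchange_paths
  have hgen' := hgen.potentialGeneric
  have hBmono := hB.monotone_cost hX hmono hgen'
  refine ⟨fun i j hij => hBmono hij, fun k _ _ A hA => ?_⟩
  have hprofile : PathConfig.ofProfile A = PathConfig.ofProfile B :=
    (hA.isMinimizer t.hasTransfer_paths hX hmono hgen').eq hX hmono hgen'
      (hB.isMinimizer hX hmono hgen')
  -- the first player of `A` uses a path of `B`, so some player of `B` pays what he pays
  obtain ⟨j, hj⟩ := PathConfig.mem_ofProfile.1 (hprofile ▸ PathConfig.mem_ofProfile.2 ⟨_, rfl⟩)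
  calc CGame.cost _ B ⟨0, hn⟩ ≤ CGame.cost _ B j := hBmono (Fin.le_def.2 (Nat.zero_le _))
    _ = CGame.cost _ A ⟨0, hn⟩ := by rw [CGame.cost_symmetric, CGame.cost_symmetric, hj, hprofile]

/-- In a generic symmetric network congestion game on an
extension-parallel graph, in a subgame-perfect outcome `B` with respect to the order
`1,…,n` the players' costs are nondecreasing in the order, and the first player's cost
in `B` is at most his cost in any `k`-lookahead outcome with respect to that order. -/
theorem ep_generic_spo_first_player (t : EPTree) (d : t.Arc → ℕ → ℝ)
    (hmono : ∀ r, Monotone (d r)) (hnonneg : ∀ r m, 0 ≤ d r m)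
    (n : ℕ) (hn : 0 < n) (hgen : CGame.Generic (SNCGep t d n))
    (B : Fin n → Finset t.Arc) (hB : CGame.IsSPO (SNCGep t d n) B) :
    (∀ i j : Fin n, i ≤ j →
      CGame.cost (SNCGep t d n) B i ≤ CGame.cost (SNCGep t d n) B j) ∧
    (∀ k, 1 ≤ k → k ≤ n → ∀ A, CGame.IsKLA k (SNCGep t d n) A →
      CGame.cost (SNCGep t d n) B ⟨0, hn⟩ ≤ CGame.cost (SNCGep t d n) A ⟨0, hn⟩) :=
  ep_generic_spo_first_player_general t d hmono n hn hgen B hB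
end

section
/- Let Γ be a series-parallel graph with nondecreasing delay functions, let G be the symmetric network congestion game on Γ with m players, and let G^n be the symmetric network congestion game on Γ with the same delay functions and n ≤ m players. Then for every outcome A of G^n and every 1-lookahead outcome B of G, O_A ≤ O_B; and if moreover n < m, then O_A ≤ W_B. -/
set_option linter.unusedSectionVars false
open SPTree

variable {R : Type} [DecidableEq R] [Fintype R]

/-- congestion as a sum of indicators -/
def cong {m : ℕ} (C : Fin m → Finset R) (r : R) : ℕ :=
  ∑ i, if r ∈ C i then 1 else 0

def ind (P : Finset R) (r : R) : ℕ := if r ∈ P then 1 else 0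

lemma congestion_eq {m} (G : CGame R m) (C : Fin m → Finset R) (r : R) :
    G.congestion C r = cong C r := by
  simp only [CGame.congestion, cong, Finset.card_filter]

/-- cost of a path `P` when entering on top of congestion `x` -/
def pathCost (d : R → ℕ → ℝ) (x : R → ℕ) (P : Finset R) : ℝ :=
  ∑ r ∈ P, d r (x r + 1)

lemma paths_nonempty : ∀ t : SPTree, t.paths.Nonempty := by
  intro t
  induction t with
  | edge => exact ⟨Finset.univ, Finset.mem_singleton_self _⟩
  | series t₁ t₂ ih₁ ih₂ =>
      exact Finset.Nonempty.image (ih₁.product ih₂) _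
  | parallel t₁ t₂ ih₁ ih₂ =>
      exact Finset.Nonempty.inl (ih₁.image _)

noncomputable def opp (t : SPTree) (d : t.Arc → ℕ → ℝ) (x : t.Arc → ℕ) : ℝ :=
  t.paths.inf' (paths_nonempty t) (pathCost d x)

lemma opp_le {t : SPTree} {d : t.Arc → ℕ → ℝ} {x : t.Arc → ℕ} {P : Finset t.Arc}
    (hP : P ∈ t.paths) : opp t d x ≤ pathCost d x P := Finset.inf'_le _ hP

lemma le_opp {t : SPTree} {d : t.Arc → ℕ → ℝ} {x : t.Arc → ℕ} {a : ℝ}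
    (h : ∀ P ∈ t.paths, a ≤ pathCost d x P) : a ≤ opp t d x := Finset.le_inf' _ _ h

lemma pathCost_mono {d : R → ℕ → ℝ} (hm : ∀ r, Monotone (d r)) {x y : R → ℕ}
    (hxy : ∀ r, x r ≤ y r) (P : Finset R) : pathCost d x P ≤ pathCost d y P :=
  Finset.sum_le_sum fun r _ => hm r (by have := hxy r; omega)

lemma opp_mono {t : SPTree} {d : t.Arc → ℕ → ℝ} (hm : ∀ r, Monotone (d r))
    {x y : t.Arc → ℕ} (hxy : ∀ r, x r ≤ y r) : opp t d x ≤ opp t d y :=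
  le_opp fun P hP => le_trans (opp_le hP) (pathCost_mono hm hxy P)

/-- greedy sequences of best responses, starting from congestion `y0` -/
inductive GreedyFrom (t : SPTree) (d : t.Arc → ℕ → ℝ) :
    (t.Arc → ℕ) → ℕ → (t.Arc → ℕ) → Prop
  | nil (y0 : t.Arc → ℕ) : GreedyFrom t d y0 0 y0
  | cons {y0 : t.Arc → ℕ} {P : Finset t.Arc} {k : ℕ} {y : t.Arc → ℕ}
      (hP : P ∈ t.paths)
      (hbest : ∀ Q ∈ t.paths, pathCost d y0 P ≤ pathCost d y0 Q)
      (htail : GreedyFrom t d (fun r => y0 r + ind P r) k y) :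
      GreedyFrom t d y0 (k + 1) y

lemma GreedyFrom.le {t : SPTree} {d : t.Arc → ℕ → ℝ} {y0 : t.Arc → ℕ} {k : ℕ}
    {y : t.Arc → ℕ} (h : GreedyFrom t d y0 k y) : ∀ r, y0 r ≤ y r := by
  induction h with
  | nil => exact fun r => le_rfl
  | cons hP hbest htail ih => exact fun r => le_trans (Nat.le_add_right _ _) (ih r)

/-- flows of value `n` on a series-parallel graph -/
inductive IsFlow : (t : SPTree) → ℕ → (t.Arc → ℕ) → Prop
  | edge (n : ℕ) : IsFlow .edge n (fun _ => n)
  | series {t₁ t₂ : SPTree} {n : ℕ} {x₁ : t₁.Arc → ℕ} {x₂ : t₂.Arc → ℕ} :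
      IsFlow t₁ n x₁ → IsFlow t₂ n x₂ → IsFlow (.series t₁ t₂) n (Sum.elim x₁ x₂)
  | parallel {t₁ t₂ : SPTree} {n₁ n₂ : ℕ} {x₁ : t₁.Arc → ℕ} {x₂ : t₂.Arc → ℕ} :
      IsFlow t₁ n₁ x₁ → IsFlow t₂ n₂ x₂ →
      IsFlow (.parallel t₁ t₂) (n₁ + n₂) (Sum.elim x₁ x₂)


lemma mem_paths_series {t₁ t₂ : SPTree} {P : Finset (SPTree.Arc (.series t₁ t₂))} :
    P ∈ (SPTree.series t₁ t₂).paths ↔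
      ∃ P₁ ∈ t₁.paths, ∃ P₂ ∈ t₂.paths,
        P = P₁.image Sum.inl ∪ P₂.image Sum.inr := by
  simp only [SPTree.paths, Finset.mem_image, Finset.mem_product, Prod.exists]
  constructor
  · rintro ⟨p₁, p₂, ⟨h₁, h₂⟩, rfl⟩; exact ⟨p₁, h₁, p₂, h₂, rfl⟩
  · rintro ⟨p₁, h₁, p₂, h₂, rfl⟩; exact ⟨p₁, p₂, ⟨h₁, h₂⟩, rfl⟩

lemma mem_paths_parallel {t₁ t₂ : SPTree} {P : Finset (SPTree.Arc (.parallel t₁ t₂))} :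
    P ∈ (SPTree.parallel t₁ t₂).paths ↔
      (∃ P₁ ∈ t₁.paths, P = P₁.image Sum.inl) ∨
      (∃ P₂ ∈ t₂.paths, P = P₂.image Sum.inr) := by
  simp only [SPTree.paths, Finset.mem_union, Finset.mem_image]
  constructor
  · rintro (⟨a, h, rfl⟩ | ⟨a, h, rfl⟩)
    · exact Or.inl ⟨a, h, rfl⟩
    · exact Or.inr ⟨a, h, rfl⟩
  · rintro (⟨a, h, rfl⟩ | ⟨a, h, rfl⟩)
    · exact Or.inl ⟨a, h, rfl⟩
    · exact Or.inr ⟨a, h, rfl⟩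

lemma mem_paths_edge {P : Finset (SPTree.Arc .edge)} :
    P ∈ SPTree.edge.paths ↔ P = Finset.univ := by
  simp only [SPTree.paths]; exact Finset.mem_singleton

lemma inl_mem_union_image {A₁ A₂ : Type} [DecidableEq A₁] [DecidableEq A₂]
    {P₁ : Finset A₁} {P₂ : Finset A₂} {a : A₁} :
    (Sum.inl a ∈ P₁.image Sum.inl ∪ P₂.image (Sum.inr : A₂ → A₁ ⊕ A₂)) ↔ a ∈ P₁ := by
  simp

lemma inr_mem_union_image {A₁ A₂ : Type} [DecidableEq A₁] [DecidableEq A₂]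
    {P₁ : Finset A₁} {P₂ : Finset A₂} {a : A₂} :
    (Sum.inr a ∈ P₁.image (Sum.inl : A₁ → A₁ ⊕ A₂) ∪ P₂.image Sum.inr) ↔ a ∈ P₂ := by
  simp

/-- summing a function over `image inl P₁ ∪ image inr P₂` -/
lemma sum_union_image {A₁ A₂ : Type} [DecidableEq A₁] [DecidableEq A₂]
    (P₁ : Finset A₁) (P₂ : Finset A₂) (f : A₁ ⊕ A₂ → ℝ) :
    ∑ r ∈ P₁.image Sum.inl ∪ P₂.image Sum.inr, f r =
      (∑ r ∈ P₁, f (Sum.inl r)) + ∑ r ∈ P₂, f (Sum.inr r) := by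
  rw [Finset.sum_union, Finset.sum_image (by simp), Finset.sum_image (by simp)]
  simp [Finset.disjoint_left]

lemma sum_image_inl {A₁ A₂ : Type} [DecidableEq A₁] [DecidableEq A₂]
    (P₁ : Finset A₁) (f : A₁ ⊕ A₂ → ℝ) :
    ∑ r ∈ P₁.image (Sum.inl : A₁ → A₁ ⊕ A₂), f r = ∑ r ∈ P₁, f (Sum.inl r) :=
  Finset.sum_image (by simp)

lemma sum_image_inr {A₁ A₂ : Type} [DecidableEq A₁] [DecidableEq A₂]
    (P₂ : Finset A₂) (f : A₁ ⊕ A₂ → ℝ) :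
    ∑ r ∈ P₂.image (Sum.inr : A₂ → A₁ ⊕ A₂), f r = ∑ r ∈ P₂, f (Sum.inr r) :=
  Finset.sum_image (by simp)

section Decomp
variable {t₁ t₂ : SPTree}

lemma pathCost_series (d : SPTree.Arc (.series t₁ t₂) → ℕ → ℝ)
    (x : SPTree.Arc (.series t₁ t₂) → ℕ) (P₁ : Finset t₁.Arc) (P₂ : Finset t₂.Arc) :
    pathCost d x (P₁.image Sum.inl ∪ P₂.image Sum.inr) =
      pathCost (fun a => d (Sum.inl a)) (fun a => x (Sum.inl a)) P₁ +
      pathCost (fun a => d (Sum.inr a)) (fun a => x (Sum.inr a)) P₂ :=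
  sum_union_image _ _ _

lemma pathCost_inl (d : SPTree.Arc (.parallel t₁ t₂) → ℕ → ℝ)
    (x : SPTree.Arc (.parallel t₁ t₂) → ℕ) (P₁ : Finset t₁.Arc) :
    pathCost d x (P₁.image Sum.inl) =
      pathCost (fun a => d (Sum.inl a)) (fun a => x (Sum.inl a)) P₁ :=
  sum_image_inl _ _

lemma pathCost_inr (d : SPTree.Arc (.parallel t₁ t₂) → ℕ → ℝ)
    (x : SPTree.Arc (.parallel t₁ t₂) → ℕ) (P₂ : Finset t₂.Arc) :
    pathCost d x (P₂.image Sum.inr) =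
      pathCost (fun a => d (Sum.inr a)) (fun a => x (Sum.inr a)) P₂ :=
  sum_image_inr _ _

lemma opp_series (d : SPTree.Arc (.series t₁ t₂) → ℕ → ℝ)
    (x : SPTree.Arc (.series t₁ t₂) → ℕ) :
    opp (.series t₁ t₂) d x =
      opp t₁ (fun a => d (Sum.inl a)) (fun a => x (Sum.inl a)) +
      opp t₂ (fun a => d (Sum.inr a)) (fun a => x (Sum.inr a)) := by
  apply le_antisymm
  · obtain ⟨Q₁, hQ₁, e₁⟩ := Finset.exists_mem_eq_inf' (paths_nonempty t₁)
      (pathCost (fun a => d (Sum.inl a)) (fun a => x (Sum.inl a)))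
    obtain ⟨Q₂, hQ₂, e₂⟩ := Finset.exists_mem_eq_inf' (paths_nonempty t₂)
      (pathCost (fun a => d (Sum.inr a)) (fun a => x (Sum.inr a)))
    have hQ : Q₁.image Sum.inl ∪ Q₂.image Sum.inr ∈ (SPTree.series t₁ t₂).paths :=
      mem_paths_series.2 ⟨Q₁, hQ₁, Q₂, hQ₂, rfl⟩
    calc opp (.series t₁ t₂) d x ≤ _ := opp_le hQ
    _ = _ := pathCost_series d x Q₁ Q₂
    _ = _ := by rw [opp, opp, ← e₁, ← e₂]
  · apply le_opp
    intro P hP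
    obtain ⟨P₁, h₁, P₂, h₂, rfl⟩ := mem_paths_series.1 hP
    erw [pathCost_series]
    exact add_le_add (opp_le h₁) (opp_le h₂)

lemma opp_parallel (d : SPTree.Arc (.parallel t₁ t₂) → ℕ → ℝ)
    (x : SPTree.Arc (.parallel t₁ t₂) → ℕ) :
    opp (.parallel t₁ t₂) d x =
      min (opp t₁ (fun a => d (Sum.inl a)) (fun a => x (Sum.inl a)))
          (opp t₂ (fun a => d (Sum.inr a)) (fun a => x (Sum.inr a))) := by
  apply le_antisymm
  · apply le_min
    · apply le_opp
      intro P₁ h₁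
      rw [← pathCost_inl d x P₁]
      exact opp_le (mem_paths_parallel.2 (Or.inl ⟨P₁, h₁, rfl⟩))
    · apply le_opp
      intro P₂ h₂
      rw [← pathCost_inr d x P₂]
      exact opp_le (mem_paths_parallel.2 (Or.inr ⟨P₂, h₂, rfl⟩))
  · apply le_opp
    intro P hP
    rcases mem_paths_parallel.1 hP with ⟨P₁, h₁, rfl⟩ | ⟨P₂, h₂, rfl⟩
    · exact le_trans (min_le_left _ _) (by erw [pathCost_inl]; exact opp_le h₁)
    · exact le_trans (min_le_right _ _) (by erw [pathCost_inr]; exact opp_le h₂)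

end Decomp

lemma ind_congr {R' S' : Type} [DecidableEq R'] [DecidableEq S'] {P : Finset R'}
    {Q : Finset S'} {r : R'} {s : S'} (h : (r ∈ P) ↔ (s ∈ Q)) : ind P r = ind Q s := by
  simp only [ind]; exact if_congr h rfl rfl

lemma ind_of_not_mem {R' : Type} [DecidableEq R'] {P : Finset R'} {r : R'} (h : r ∉ P) :
    ind P r = 0 := by simp only [ind]; exact if_neg h

lemma ind_of_mem {R' : Type} [DecidableEq R'] {P : Finset R'} {r : R'} (h : r ∈ P) :
    ind P r = 1 := by simp only [ind]; exact if_pos h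


lemma isFlow_edge_inv {n : ℕ} {x : SPTree.Arc .edge → ℕ} (h : IsFlow .edge n x) :
    x = fun _ => n := by cases h; rfl

lemma isFlow_series_inv {t₁ t₂ : SPTree} {n : ℕ} {x : SPTree.Arc (.series t₁ t₂) → ℕ}
    (h : IsFlow (.series t₁ t₂) n x) :
    ∃ x₁ x₂, IsFlow t₁ n x₁ ∧ IsFlow t₂ n x₂ ∧ x = Sum.elim x₁ x₂ := by
  cases h with
  | series h₁ h₂ => exact ⟨_, _, h₁, h₂, rfl⟩

lemma isFlow_parallel_inv {t₁ t₂ : SPTree} {n : ℕ} {x : SPTree.Arc (.parallel t₁ t₂) → ℕ}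
    (h : IsFlow (.parallel t₁ t₂) n x) :
    ∃ n₁ n₂ x₁ x₂, n = n₁ + n₂ ∧ IsFlow t₁ n₁ x₁ ∧ IsFlow t₂ n₂ x₂ ∧ x = Sum.elim x₁ x₂ := by
  cases h with
  | parallel h₁ h₂ => exact ⟨_, _, _, _, rfl, h₁, h₂, rfl⟩

lemma isFlow_zero : ∀ t : SPTree, IsFlow t 0 (fun _ => 0) := by
  intro t
  induction t with
  | edge => exact IsFlow.edge 0
  | series t₁ t₂ ih₁ ih₂ =>
      have : (fun _ => 0 : SPTree.Arc (.series t₁ t₂) → ℕ) =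
          Sum.elim (fun _ => 0) (fun _ => 0) := by funext r; cases r <;> rfl
      rw [this]; exact IsFlow.series ih₁ ih₂
  | parallel t₁ t₂ ih₁ ih₂ =>
      have : (fun _ => 0 : SPTree.Arc (.parallel t₁ t₂) → ℕ) =
          Sum.elim (fun _ => 0) (fun _ => 0) := by funext r; cases r <;> rfl
      have h := IsFlow.parallel ih₁ ih₂
      rw [this]; exact h

lemma isFlow_add : ∀ {t : SPTree} {a b : ℕ} {x z : t.Arc → ℕ},
    IsFlow t a x → IsFlow t b z → IsFlow t (a + b) (fun r => x r + z r) := by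
  intro t a b x z hx
  induction hx generalizing b with
  | edge n =>
      intro hz
      rw [isFlow_edge_inv hz]
      exact IsFlow.edge (n + b)
  | @series t₁ t₂ n x₁ x₂ h₁ h₂ ih₁ ih₂ =>
      intro hz
      obtain ⟨z₁, z₂, hz₁, hz₂, rfl⟩ := isFlow_series_inv hz
      have : (fun (r : SPTree.Arc (.series t₁ t₂)) => Sum.elim x₁ x₂ r + Sum.elim z₁ z₂ r) =
          Sum.elim (fun r => x₁ r + z₁ r) (fun r => x₂ r + z₂ r) := by
        funext r; cases r <;> rfl
      rw [this]
      exact IsFlow.series (ih₁ hz₁) (ih₂ hz₂)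
  | @parallel t₁ t₂ n₁ n₂ x₁ x₂ h₁ h₂ ih₁ ih₂ =>
      intro hz
      obtain ⟨b₁, b₂, z₁, z₂, rfl, hz₁, hz₂, rfl⟩ := isFlow_parallel_inv hz
      have : (fun (r : SPTree.Arc (.parallel t₁ t₂)) => Sum.elim x₁ x₂ r + Sum.elim z₁ z₂ r) =
          Sum.elim (fun r => x₁ r + z₁ r) (fun r => x₂ r + z₂ r) := by
        funext r; cases r <;> rfl
      rw [this, show n₁ + n₂ + (b₁ + b₂) = (n₁ + b₁) + (n₂ + b₂) by omega]
      exact IsFlow.parallel (ih₁ hz₁) (ih₂ hz₂)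

lemma isFlow_ind : ∀ {t : SPTree} {P : Finset t.Arc}, P ∈ t.paths →
    IsFlow t 1 (ind P) := by
  intro t
  induction t with
  | edge =>
      intro P hP
      rw [mem_paths_edge] at hP
      subst hP
      have : ind (Finset.univ : Finset (SPTree.Arc .edge)) = fun _ => 1 := by
        funext r; simp [ind]
      rw [this]; exact IsFlow.edge 1
  | series t₁ t₂ ih₁ ih₂ =>
      intro P hP
      obtain ⟨P₁, h₁, P₂, h₂, rfl⟩ := mem_paths_series.1 hP
      have : (ind (P₁.image Sum.inl ∪ P₂.image Sum.inr) : SPTree.Arc (.series t₁ t₂) → ℕ) =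
          Sum.elim (ind P₁) (ind P₂) := by
        funext r
        cases r with
        | inl a => exact ind_congr inl_mem_union_image
        | inr a => exact ind_congr inr_mem_union_image
      erw [this]
      exact IsFlow.series (ih₁ h₁) (ih₂ h₂)
  | parallel t₁ t₂ ih₁ ih₂ =>
      intro P hP
      rcases mem_paths_parallel.1 hP with ⟨P₁, h₁, rfl⟩ | ⟨P₂, h₂, rfl⟩
      · have : (ind (P₁.image Sum.inl) : SPTree.Arc (.parallel t₁ t₂) → ℕ) =
            Sum.elim (ind P₁) (fun _ => 0) := by
          funext r; cases r with
          | inl a =>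
              refine ind_congr ?_
              erw [Finset.mem_image]
              exact ⟨fun ⟨b, hb, e⟩ => by obtain rfl := Sum.inl.inj e; exact hb,
                fun h => ⟨a, h, rfl⟩⟩
          | inr a =>
              refine ind_of_not_mem ?_
              erw [Finset.mem_image]
              rintro ⟨b, hb, e⟩
              exact Sum.inl_ne_inr e
        erw [this]
        exact IsFlow.parallel (ih₁ h₁) (isFlow_zero t₂)
      · have : (ind (P₂.image Sum.inr) : SPTree.Arc (.parallel t₁ t₂) → ℕ) =
            Sum.elim (fun _ => 0) (ind P₂) := by
          funext r; cases r with
          | inl a =>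
              refine ind_of_not_mem ?_
              erw [Finset.mem_image]
              rintro ⟨b, hb, e⟩
              exact Sum.inr_ne_inl e
          | inr a =>
              refine ind_congr ?_
              erw [Finset.mem_image]
              exact ⟨fun ⟨b, hb, e⟩ => by obtain rfl := Sum.inr.inj e; exact hb,
                fun h => ⟨a, h, rfl⟩⟩
        erw [this]
        have h := IsFlow.parallel (isFlow_zero t₁) (ih₂ h₂)
        simpa using h

lemma isFlow_cong : ∀ {n : ℕ} {t : SPTree} (A : Fin n → Finset t.Arc),
    (∀ i, A i ∈ t.paths) → IsFlow t n (cong A) := by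
  intro n
  induction n with
  | zero =>
      intro t A hA
      have : cong A = fun _ => 0 := by funext r; simp [cong]
      rw [this]; exact isFlow_zero t
  | succ n ih =>
      intro t A hA
      have hcong : cong A = fun r => ind (A 0) r + cong (Fin.tail A) r := by
        funext r
        simp only [cong, ind, Fin.tail, Fin.sum_univ_succ]; rfl
      have h := isFlow_add (isFlow_ind (hA 0)) (ih (Fin.tail A) (fun i => hA i.succ))
      rw [hcong]
      rwa [show (1 : ℕ) + n = n + 1 by omega] at h

lemma greedy_edge {d : SPTree.Arc .edge → ℕ → ℝ} :
    ∀ {y0 : SPTree.Arc .edge → ℕ} {k : ℕ} {y : SPTree.Arc .edge → ℕ},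
    GreedyFrom .edge d y0 k y → ∀ r, y r = y0 r + k := by
  intro y0 k y h
  induction h with
  | nil => simp
  | @cons y0 P k y hP hbest htail ih =>
      intro r
      rw [mem_paths_edge] at hP
      subst hP
      have := ih r
      simp only [ind_of_mem (Finset.mem_univ r)] at this
      omega

lemma greedy_series {t₁ t₂ : SPTree} {d : SPTree.Arc (.series t₁ t₂) → ℕ → ℝ} :
    ∀ {y0 k y}, GreedyFrom (.series t₁ t₂) d y0 k y →
    GreedyFrom t₁ (fun a => d (Sum.inl a)) (fun a => y0 (Sum.inl a)) k
      (fun a => y (Sum.inl a)) ∧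
    GreedyFrom t₂ (fun a => d (Sum.inr a)) (fun a => y0 (Sum.inr a)) k
      (fun a => y (Sum.inr a)) := by
  intro y0 k y h
  induction h with
  | nil => exact ⟨GreedyFrom.nil _, GreedyFrom.nil _⟩
  | @cons y0 P k y hP hbest htail ih =>
      obtain ⟨P₁, hP₁, P₂, hP₂, rfl⟩ := mem_paths_series.1 hP
      have hbest₁ : ∀ Q₁ ∈ t₁.paths,
          pathCost (fun a => d (Sum.inl a)) (fun a => y0 (Sum.inl a)) P₁ ≤
          pathCost (fun a => d (Sum.inl a)) (fun a => y0 (Sum.inl a)) Q₁ := by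
        intro Q₁ hQ₁
        have h := hbest _ (mem_paths_series.2 ⟨Q₁, hQ₁, P₂, hP₂, rfl⟩)
        erw [pathCost_series, pathCost_series] at h
        linarith
      have hbest₂ : ∀ Q₂ ∈ t₂.paths,
          pathCost (fun a => d (Sum.inr a)) (fun a => y0 (Sum.inr a)) P₂ ≤
          pathCost (fun a => d (Sum.inr a)) (fun a => y0 (Sum.inr a)) Q₂ := by
        intro Q₂ hQ₂
        have h := hbest _ (mem_paths_series.2 ⟨P₁, hP₁, Q₂, hQ₂, rfl⟩)
        erw [pathCost_series, pathCost_series] at h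
        linarith
      have e₁ : (fun a => (fun r => y0 r + ind (P₁.image Sum.inl ∪ P₂.image Sum.inr) r)
          (Sum.inl a)) = fun a => y0 (Sum.inl a) + ind P₁ a := by
        funext a
        simp only []
        rw [ind_congr (inl_mem_union_image (P₁ := P₁) (P₂ := P₂) (a := a))]
      have e₂ : (fun a => (fun r => y0 r + ind (P₁.image Sum.inl ∪ P₂.image Sum.inr) r)
          (Sum.inr a)) = fun a => y0 (Sum.inr a) + ind P₂ a := by
        funext a
        simp only []
        rw [ind_congr (inr_mem_union_image (P₁ := P₁) (P₂ := P₂) (a := a))]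
      refine ⟨GreedyFrom.cons hP₁ hbest₁ ?_, GreedyFrom.cons hP₂ hbest₂ ?_⟩
      · rw [← e₁]; exact ih.1
      · rw [← e₂]; exact ih.2

lemma greedy_parallel {t₁ t₂ : SPTree} {d : SPTree.Arc (.parallel t₁ t₂) → ℕ → ℝ}
    (hm : ∀ r, Monotone (d r)) :
    ∀ {y0 k y}, GreedyFrom (.parallel t₁ t₂) d y0 k y →
    ∀ y01 y02, y0 = Sum.elim y01 y02 →
    ∃ k₁ k₂, k₁ + k₂ = k ∧
      GreedyFrom t₁ (fun a => d (Sum.inl a)) y01 k₁ (fun a => y (Sum.inl a)) ∧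
      GreedyFrom t₂ (fun a => d (Sum.inr a)) y02 k₂ (fun a => y (Sum.inr a)) ∧
      (0 < k₁ → ∃ z₁, GreedyFrom t₁ (fun a => d (Sum.inl a)) y01 (k₁ - 1) z₁ ∧
        opp t₁ (fun a => d (Sum.inl a)) z₁ ≤
          opp t₂ (fun a => d (Sum.inr a)) (fun a => y (Sum.inr a))) ∧
      (0 < k₂ → ∃ z₂, GreedyFrom t₂ (fun a => d (Sum.inr a)) y02 (k₂ - 1) z₂ ∧
        opp t₂ (fun a => d (Sum.inr a)) z₂ ≤
          opp t₁ (fun a => d (Sum.inl a)) (fun a => y (Sum.inl a))) := by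
  intro y0 k y h
  induction h with
  | nil y0 =>
      rintro y01 y02 rfl
      exact ⟨0, 0, rfl, GreedyFrom.nil _, GreedyFrom.nil _,
        fun h => absurd h (by omega), fun h => absurd h (by omega)⟩
  | @cons y0 P k y hP hbest htail ih =>
      rintro y01 y02 rfl
      rcases mem_paths_parallel.1 hP with ⟨P₁, hP₁, rfl⟩ | ⟨P₂, hP₂, rfl⟩
      · -- step on side 1
        have e : (fun r => Sum.elim y01 y02 r + ind (P₁.image Sum.inl) r) =
            Sum.elim (fun a => y01 a + ind P₁ a) y02 := by
          funext r
          cases r with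
          | inl a =>
              have : ind (P₁.image (Sum.inl : t₁.Arc → SPTree.Arc (.parallel t₁ t₂)))
                  (Sum.inl a) = ind P₁ a := by
                refine ind_congr ?_
                simp only [Finset.mem_image]
                exact ⟨fun ⟨b, hb, e⟩ => by obtain rfl := Sum.inl.inj e; exact hb,
                  fun h => ⟨a, h, rfl⟩⟩
              simp only [Sum.elim_inl, Sum.elim_inr, this]
          | inr a =>
              have : ind (P₁.image (Sum.inl : t₁.Arc → SPTree.Arc (.parallel t₁ t₂)))
                  (Sum.inr a) = 0 := by
                refine ind_of_not_mem ?_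
                simp only [Finset.mem_image]
                rintro ⟨b, hb, e⟩
                exact Sum.inl_ne_inr e
              simp only [Sum.elim_inl, Sum.elim_inr, this]
              omega
        obtain ⟨k₁, k₂, hk, h1, h2, c1, c2⟩ := ih _ _ e
        have hbest₁ : ∀ Q₁ ∈ t₁.paths,
            pathCost (fun a => d (Sum.inl a)) y01 P₁ ≤
            pathCost (fun a => d (Sum.inl a)) y01 Q₁ := by
          intro Q₁ hQ₁
          have h := hbest _ (mem_paths_parallel.2 (Or.inl ⟨Q₁, hQ₁, rfl⟩))
          erw [pathCost_inl, pathCost_inl] at h; exact h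
        have hbestP : ∀ Q₂ ∈ t₂.paths,
            pathCost (fun a => d (Sum.inl a)) y01 P₁ ≤
            pathCost (fun a => d (Sum.inr a)) y02 Q₂ := by
          intro Q₂ hQ₂
          have h := hbest _ (mem_paths_parallel.2 (Or.inr ⟨Q₂, hQ₂, rfl⟩))
          erw [pathCost_inl, pathCost_inr] at h; exact h
        refine ⟨k₁ + 1, k₂, by omega, GreedyFrom.cons hP₁ hbest₁ h1, h2, ?_, ?_⟩
        · intro _
          rcases Nat.eq_zero_or_pos k₁ with hk₁ | hk₁
          · subst hk₁
            refine ⟨y01, GreedyFrom.nil _, ?_⟩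
            have step1 : opp t₁ (fun a => d (Sum.inl a)) y01 ≤
                pathCost (fun a => d (Sum.inl a)) y01 P₁ := opp_le hP₁
            have step2 : opp t₁ (fun a => d (Sum.inl a)) y01 ≤
                opp t₂ (fun a => d (Sum.inr a)) y02 :=
              le_opp fun Q₂ hQ₂ => le_trans step1 (hbestP Q₂ hQ₂)
            exact le_trans step2 (opp_mono (fun a => hm (Sum.inr a))
              (fun a => h2.le a))
          · obtain ⟨z₁, hz₁, hle₁⟩ := c1 hk₁
            refine ⟨z₁, ?_, hle₁⟩
            have : k₁ - 1 + 1 = k₁ := by omega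
            have h' := GreedyFrom.cons hP₁ hbest₁ hz₁
            rwa [this] at h'
        · intro hk₂
          obtain ⟨z₂, hz₂, hle₂⟩ := c2 hk₂
          exact ⟨z₂, hz₂, hle₂⟩
      · -- step on side 2
        have e : (fun r => Sum.elim y01 y02 r + ind (P₂.image Sum.inr) r) =
            Sum.elim y01 (fun a => y02 a + ind P₂ a) := by
          funext r
          cases r with
          | inl a =>
              have : ind (P₂.image (Sum.inr : t₂.Arc → SPTree.Arc (.parallel t₁ t₂)))
                  (Sum.inl a) = 0 := by
                refine ind_of_not_mem ?_
                simp only [Finset.mem_image]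
                rintro ⟨b, hb, e⟩
                exact Sum.inr_ne_inl e
              simp only [Sum.elim_inl, Sum.elim_inr, this]
              omega
          | inr a =>
              have : ind (P₂.image (Sum.inr : t₂.Arc → SPTree.Arc (.parallel t₁ t₂)))
                  (Sum.inr a) = ind P₂ a := by
                refine ind_congr ?_
                simp only [Finset.mem_image]
                exact ⟨fun ⟨b, hb, e⟩ => by obtain rfl := Sum.inr.inj e; exact hb,
                  fun h => ⟨a, h, rfl⟩⟩
              simp only [Sum.elim_inl, Sum.elim_inr, this]
        obtain ⟨k₁, k₂, hk, h1, h2, c1, c2⟩ := ih _ _ e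
        have hbest₂ : ∀ Q₂ ∈ t₂.paths,
            pathCost (fun a => d (Sum.inr a)) y02 P₂ ≤
            pathCost (fun a => d (Sum.inr a)) y02 Q₂ := by
          intro Q₂ hQ₂
          have h := hbest _ (mem_paths_parallel.2 (Or.inr ⟨Q₂, hQ₂, rfl⟩))
          erw [pathCost_inr, pathCost_inr] at h; exact h
        have hbestP : ∀ Q₁ ∈ t₁.paths,
            pathCost (fun a => d (Sum.inr a)) y02 P₂ ≤
            pathCost (fun a => d (Sum.inl a)) y01 Q₁ := by
          intro Q₁ hQ₁
          have h := hbest _ (mem_paths_parallel.2 (Or.inl ⟨Q₁, hQ₁, rfl⟩))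
          erw [pathCost_inr, pathCost_inl] at h; exact h
        refine ⟨k₁, k₂ + 1, by omega, h1, GreedyFrom.cons hP₂ hbest₂ h2, ?_, ?_⟩
        · intro hk₁
          obtain ⟨z₁, hz₁, hle₁⟩ := c1 hk₁
          exact ⟨z₁, hz₁, hle₁⟩
        · intro _
          rcases Nat.eq_zero_or_pos k₂ with hk₂ | hk₂
          · subst hk₂
            refine ⟨y02, GreedyFrom.nil _, ?_⟩
            have step1 : opp t₂ (fun a => d (Sum.inr a)) y02 ≤
                pathCost (fun a => d (Sum.inr a)) y02 P₂ := opp_le hP₂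
            have step2 : opp t₂ (fun a => d (Sum.inr a)) y02 ≤
                opp t₁ (fun a => d (Sum.inl a)) y01 :=
              le_opp fun Q₁ hQ₁ => le_trans step1 (hbestP Q₁ hQ₁)
            exact le_trans step2 (opp_mono (fun a => hm (Sum.inl a))
              (fun a => h1.le a))
          · obtain ⟨z₂, hz₂, hle₂⟩ := c2 hk₂
            refine ⟨z₂, ?_, hle₂⟩
            have : k₂ - 1 + 1 = k₂ := by omega
            have h' := GreedyFrom.cons hP₂ hbest₂ hz₂
            rwa [this] at h'

lemma main_lemma : ∀ (t : SPTree) (d : t.Arc → ℕ → ℝ), (∀ r, Monotone (d r)) →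
    ∀ {n k : ℕ} {x y : t.Arc → ℕ}, n ≤ k → IsFlow t n x →
    GreedyFrom t d (fun _ => 0) k y → opp t d x ≤ opp t d y := by
  intro t
  induction t with
  | edge =>
      intro d hm n k x y hnk hx hy
      rw [isFlow_edge_inv hx]
      refine opp_mono hm ?_
      intro r
      rw [greedy_edge hy r]
      omega
  | series t₁ t₂ ih₁ ih₂ =>
      intro d hm n k x y hnk hx hy
      obtain ⟨x₁, x₂, hx₁, hx₂, rfl⟩ := isFlow_series_inv hx
      obtain ⟨h1, h2⟩ := greedy_series hy
      erw [opp_series, opp_series]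
      exact add_le_add
        (ih₁ _ (fun a => hm (Sum.inl a)) hnk hx₁ h1)
        (ih₂ _ (fun a => hm (Sum.inr a)) hnk hx₂ h2)
  | parallel t₁ t₂ ih₁ ih₂ =>
      intro d hm n k x y hnk hx hy
      obtain ⟨n₁, n₂, x₁, x₂, rfl, hx₁, hx₂, rfl⟩ := isFlow_parallel_inv hx
      have e : (fun _ => (0 : ℕ)) =
          (Sum.elim (fun _ => 0) (fun _ => 0) : SPTree.Arc (.parallel t₁ t₂) → ℕ) := by
        funext r; cases r <;> rfl
      obtain ⟨k₁, k₂, hk, h1, h2, c1, c2⟩ := greedy_parallel hm hy _ _ e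
      erw [opp_parallel, opp_parallel]
      apply le_min
      · by_cases hcase : n₁ ≤ k₁
        · exact le_trans (min_le_left _ _) (ih₁ _ (fun a => hm (Sum.inl a)) hcase hx₁ h1)
        · have hn₂ : n₂ ≤ k₂ - 1 := by omega
          have hk₂ : 0 < k₂ := by omega
          obtain ⟨z₂, hz₂, hle₂⟩ := c2 hk₂
          exact le_trans (min_le_right _ _)
            (le_trans (ih₂ _ (fun a => hm (Sum.inr a)) hn₂ hx₂ hz₂) hle₂)
      · by_cases hcase : n₂ ≤ k₂
        · exact le_trans (min_le_right _ _) (ih₂ _ (fun a => hm (Sum.inr a)) hcase hx₂ h2)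
        · have hn₁ : n₁ ≤ k₁ - 1 := by omega
          have hk₁ : 0 < k₁ := by omega
          obtain ⟨z₁, hz₁, hle₁⟩ := c1 hk₁
          exact le_trans (min_le_left _ _)
            (le_trans (ih₁ _ (fun a => hm (Sum.inl a)) hn₁ hx₁ hz₁) hle₁)

lemma cong_pos {m : ℕ} {C : Fin m → Finset R} {i : Fin m} {r : R} (h : r ∈ C i) :
    1 ≤ cong C r := by
  unfold cong
  calc (1 : ℕ) = (if r ∈ C i then 1 else 0) := (if_pos h).symm
  _ ≤ _ := Finset.single_le_sum (f := fun j : Fin m => if r ∈ C j then 1 else 0)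
    (fun j _ => Nat.zero_le _) (Finset.mem_univ i)

lemma cong_succ {m : ℕ} (C : Fin (m + 1) → Finset R) (r : R) :
    cong C r = ind (C 0) r + cong (Fin.tail C) r := by
  simp only [cong, ind, Fin.tail, Fin.sum_univ_succ]; rfl

lemma cost_one (G1 : CGame R 1) (a : Finset R) (f : Fin 0 → Finset R) :
    G1.cost (Fin.cons a f) 0 = ∑ r ∈ a, G1.delay r 1 := by
  unfold CGame.cost
  refine Finset.sum_congr (show (Fin.cons a f : Fin 1 → Finset R) 0 = a from rfl) fun r hr => ?_
  congr 1
  rw [congestion_eq]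
  unfold cong
  rw [Fin.sum_univ_one, if_pos (show r ∈ (Fin.cons a f : Fin 1 → Finset R) 0 from hr)]

lemma spo_one {m : ℕ} (G1 : CGame R m) (hpos : 0 < m) (hm1 : m = 1)
    (B : Fin m → Finset R) (h : CGame.IsSPO G1 B) :
    B ⟨0, hpos⟩ ∈ G1.actions ⟨0, hpos⟩ ∧
    ∀ a ∈ G1.actions ⟨0, hpos⟩,
      (∑ r ∈ B ⟨0, hpos⟩, G1.delay r 1) ≤ ∑ r ∈ a, G1.delay r 1 := by
  subst hm1
  obtain ⟨hmem, f, hspo, hfB, hcost⟩ := h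
  have h0 : (⟨0, hpos⟩ : Fin 1) = 0 := rfl
  rw [h0]
  refine ⟨hmem, fun a ha => ?_⟩
  have := hcost a ha
  rwa [cost_one, cost_one] at this

section Game
variable {t : SPTree}

lemma cost_formula {m : ℕ} (d : t.Arc → ℕ → ℝ) (y0 : t.Arc → ℕ) (G : CGame t.Arc m)
    (hdel : ∀ r y, G.delay r y = d r (y + y0 r)) (C : Fin m → Finset t.Arc) (i : Fin m) :
    G.cost C i = ∑ r ∈ C i, d r (cong C r + y0 r) := by
  unfold CGame.cost
  exact Finset.sum_congr rfl fun r _ => by rw [congestion_eq, hdel]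

lemma kla_greedy (d : t.Arc → ℕ → ℝ) (hm : ∀ r, Monotone (d r)) :
    ∀ (m : ℕ) (G : CGame t.Arc m) (y0 : t.Arc → ℕ),
    (∀ i, G.actions i = t.paths) → (∀ r y, G.delay r y = d r (y + y0 r)) →
    ∀ C : Fin m → Finset t.Arc, CGame.IsKLA 1 G C →
      GreedyFrom t d y0 m (fun r => y0 r + cong C r) ∧
      ∀ i : Fin m, ∃ z, GreedyFrom t d y0 (i : ℕ) z ∧ opp t d z ≤ G.cost C i := by
  intro m
  induction m with
  | zero =>
      intro G y0 hact hdel C h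
      constructor
      · have e : (fun r => y0 r + cong C r) = y0 := funext fun r => by simp [cong]
        rw [e]; exact GreedyFrom.nil _
      · exact fun i => i.elim0
  | succ m ih =>
      intro G y0 hact hdel C h
      obtain ⟨⟨hk, B, hspo, hB0⟩, htail⟩ := h
      obtain ⟨hmem, hbest⟩ := spo_one (G.truncate 1) hk (by omega) B hspo
      rw [hB0] at hmem hbest
      have htrunc_act : (G.truncate 1).actions ⟨0, hk⟩ = t.paths := hact _
      rw [htrunc_act] at hmem hbest
      have hdelay_one : ∀ P : Finset t.Arc,
          (∑ r ∈ P, (G.truncate 1).delay r 1) = pathCost d y0 P := by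
        intro P
        refine Finset.sum_congr rfl fun r _ => ?_
        show G.delay r 1 = d r (y0 r + 1)
        rw [hdel, Nat.add_comm]
      have hbr : ∀ Q ∈ t.paths, pathCost d y0 (C 0) ≤ pathCost d y0 Q := by
        intro Q hQ
        have := hbest Q hQ
        rwa [hdelay_one, hdelay_one] at this
      -- the induced subgame
      set G' := G.subgame (C 0) with hG'
      have hact' : ∀ i, G'.actions i = t.paths := fun i => hact i.succ
      have hdel' : ∀ r y, G'.delay r y = d r (y + (y0 r + ind (C 0) r)) := by
        intro r y
        have e : G'.delay r y = G.delay r (y + ind (C 0) r) := rfl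
        rw [e, hdel]
        congr 1
        ring
      obtain ⟨hgreedy', hcost'⟩ := ih G' (fun r => y0 r + ind (C 0) r) hact' hdel'
        (Fin.tail C) htail
      have e2 : (fun r => (y0 r + ind (C 0) r) + cong (Fin.tail C) r) =
          (fun r => y0 r + cong C r) := by
        funext r
        rw [cong_succ C r]
        ring
      rw [e2] at hgreedy'
      have hcost_eq : ∀ j : Fin m, G'.cost (Fin.tail C) j = G.cost C j.succ := by
        intro j
        rw [cost_formula d (fun r => y0 r + ind (C 0) r) G' hdel',
          cost_formula d y0 G hdel]
        refine Finset.sum_congr rfl fun r _ => ?_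
        congr 1
        rw [cong_succ C r]
        ring
      refine ⟨GreedyFrom.cons hmem hbr hgreedy', fun i => ?_⟩
      refine Fin.cases ?_ ?_ i
      · refine ⟨y0, ?_, ?_⟩
        · rw [show ((0 : Fin (m + 1)) : ℕ) = 0 from rfl]
          exact GreedyFrom.nil _
        · rw [cost_formula d y0 G hdel]
          refine le_trans (opp_le hmem) (Finset.sum_le_sum fun r hr => ?_)
          exact hm r (by have := cong_pos (C := C) (i := 0) hr; omega)
      · intro j
        obtain ⟨z, hz, hle⟩ := hcost' j
        refine ⟨z, ?_, ?_⟩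
        · rw [Fin.val_succ]
          exact GreedyFrom.cons hmem hbr hz
        · rw [← hcost_eq j]
          exact hle

lemma oppCost_eq {m : ℕ} (d : t.Arc → ℕ → ℝ) (G : CGame t.Arc m)
    (hdel : ∀ r y, G.delay r y = d r y) (C : Fin m → Finset t.Arc) :
    G.oppCost t.paths C = opp t d (cong C) := by
  unfold CGame.oppCost opp
  rw [Finset.inf'_eq_csInf_image]
  congr 1
  ext v
  simp only [Set.mem_setOf_eq, Set.mem_image, Finset.mem_coe]
  constructor
  · rintro ⟨P, hP, rfl⟩
    refine ⟨P, hP, ?_⟩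
    exact Finset.sum_congr rfl fun r _ => by rw [congestion_eq, hdel]
  · rintro ⟨P, hP, rfl⟩
    refine ⟨P, hP, ?_⟩
    exact Finset.sum_congr rfl fun r _ => by rw [congestion_eq, hdel]

end Game
/-- Let `G` be the SNCG with `m` players on a series-parallel graph and
`G^n` the same game with `n ≤ m` players. For every outcome `A` of `G^n` and every
1-lookahead outcome `B` of `G`, `O_A ≤ O_B`; and if `n < m` then also `O_A ≤ W_B`. -/
theorem sp_opportunity_costs (t : SPTree) (d : t.Arc → ℕ → ℝ)
    (hmono : ∀ r, Monotone (d r)) (hnonneg : ∀ r m, 0 ≤ d r m)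
    (m n : ℕ) (hnm : n ≤ m)
    (A : Fin n → Finset t.Arc) (hA : CGame.IsOutcome (SNCGsp t d n) A)
    (B : Fin m → Finset t.Arc) (hB : CGame.IsKLO 1 (SNCGsp t d m) B) :
    CGame.oppCost (SNCGsp t d n) t.paths A ≤ CGame.oppCost (SNCGsp t d m) t.paths B ∧
    (n < m →
      CGame.oppCost (SNCGsp t d n) t.paths A ≤ CGame.worstCost (SNCGsp t d m) B) := by
  
  classical
  obtain ⟨σ, hC⟩ := hB
  set C : Fin m → Finset t.Arc := B ∘ σ with hCdef
  have hact : ∀ i, ((SNCGsp t d m).reorder σ).actions i = t.paths := fun i => rfl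
  have hdel : ∀ r y, ((SNCGsp t d m).reorder σ).delay r y = d r (y + (fun _ => 0) r) :=
    fun r y => rfl
  obtain ⟨hgreedy, hcost⟩ := kla_greedy d hmono m _ (fun _ => 0) hact hdel C hC
  have e0 : (fun r => (fun _ => (0 : ℕ)) r + cong C r) = cong C := by
    funext r; simp
  rw [e0] at hgreedy
  have hflowA : IsFlow t n (cong A) := isFlow_cong A hA
  have hcongCB' : cong C = cong B := by
    funext r
    exact Equiv.sum_comp σ (fun i => if r ∈ B i then 1 else 0)
  have hOA : CGame.oppCost (SNCGsp t d n) t.paths A = opp t d (cong A) :=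
    oppCost_eq d _ (fun r y => rfl) A
  have hOB : CGame.oppCost (SNCGsp t d m) t.paths B = opp t d (cong B) :=
    oppCost_eq d _ (fun r y => rfl) B
  constructor
  · rw [hOA, hOB, ← hcongCB']
    exact main_lemma t d hmono hnm hflowA hgreedy
  · intro hlt
    have hm1 : 0 < m := by omega
    set i0 : Fin m := ⟨m - 1, by omega⟩ with hi0
    obtain ⟨z, hz, hle⟩ := hcost i0
    have hval : (i0 : ℕ) = m - 1 := rfl
    rw [hval] at hz
    have h1 : opp t d (cong A) ≤ opp t d z :=
      main_lemma t d hmono (by omega) hflowA hz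
    have hcosteq : ((SNCGsp t d m).reorder σ).cost C i0 = (SNCGsp t d m).cost B (σ i0) := by
      unfold CGame.cost
      refine Finset.sum_congr rfl fun r _ => ?_
      congr 1
      rw [congestion_eq, congestion_eq, hcongCB']
    have h2 : (SNCGsp t d m).cost B (σ i0) ≤ CGame.worstCost (SNCGsp t d m) B := by
      have hfin : {y | ∃ i, y = (SNCGsp t d m).cost B i}.Finite := by
        have e : {y | ∃ i, y = (SNCGsp t d m).cost B i} =
            Set.range ((SNCGsp t d m).cost B) := by
          ext v; simp [eq_comm, Set.range]
        rw [e]; exact Set.finite_range _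
      exact le_csSup hfin.bddAbove ⟨σ i0, rfl⟩
    rw [hOA]
    calc opp t d (cong A) ≤ opp t d z := h1
    _ ≤ ((SNCGsp t d m).reorder σ).cost C i0 := hle
    _ = (SNCGsp t d m).cost B (σ i0) := hcosteq
    _ ≤ _ := h2
end
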